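/- arXiv:1501.02470 — 6 statements merged into one kernel-verified Lean document; each statement's English description precedes it below -/
import Mathlib

section
/- Let K be a finite field, let V be a nonzero finite-dimensional vector space over K, and let U_1, …, U_m be proper subspaces of V. If V = U_1 ∪ ⋯ ∪ U_m, then m > |K|. -/
/-!
If `V` is the union of proper subspaces `U i`, `i ∈ s`, and `s` is irredundant, pick `x` lying only
in `U j` and `y ∉ U j`. The `|K|` points `y + t • x` of the affine line avoid `U j`, and any other
`U i` contains at most one of them, since two would put `x` in `U i`. Hence `|K| ≤ |s| - 1`.
-/

namespace Submodule

variable {ι K V : Type*} [Field K] [Fintype K] [AddCommGroup V] [Module K V]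

theorem card_le_card_erase_of_forall_exists_mem [DecidableEq ι] {s : Finset ι}
    {p : ι → Submodule K V} (hcover : ∀ v, ∃ i ∈ s, v ∈ p i) {j : ι} {x y : V}
    (hxj : x ∈ p j) (hyj : y ∉ p j) (hx : ∀ i ∈ s.erase j, x ∉ p i) :
    Fintype.card K ≤ (s.erase j).card := by
  have hline (t : K) : y + t • x ∉ p j := fun h =>
    hyj (by simpa using sub_mem h (smul_mem _ t hxj))
  choose f hfs hf using fun t : K => hcover (y + t • x)
  have hf_mem (t : K) : f t ∈ s.erase j :=
    Finset.mem_erase.mpr ⟨fun h => hline t (h ▸ hf t), hfs t⟩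
  have hf_inj : Function.Injective f := by
    intro t t' htt'
    by_contra hne
    have hdiff : (t - t') • x ∈ p (f t) := by
      convert sub_mem (hf t) (htt' ▸ hf t') using 1
      module
    exact hx _ (hf_mem t) (((p (f t)).smul_mem_iff (sub_ne_zero.mpr hne)).mp hdiff)
  simpa only [Finset.card_univ] using
    Finset.card_le_card_of_injOn (s := Finset.univ) f (fun t _ => hf_mem t) hf_inj.injOn

theorem card_lt_card_of_forall_exists_mem [DecidableEq ι] {s : Finset ι}
    {p : ι → Submodule K V} (hp : ∀ i ∈ s, p i ≠ ⊤) (hcover : ∀ v, ∃ i ∈ s, v ∈ p i) :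
    Fintype.card K < s.card := by
  induction s using Finset.strongInduction with
  | H s ih =>
  by_cases hredundant : ∃ j ∈ s, ∀ v, ∃ i ∈ s.erase j, v ∈ p i
  · obtain ⟨j, hj, hcover'⟩ := hredundant
    calc Fintype.card K < (s.erase j).card :=
          ih _ (Finset.erase_ssubset hj) (fun i hi => hp i (Finset.mem_of_mem_erase hi)) hcover'
      _ < s.card := Finset.card_erase_lt_of_mem hj
  · push Not at hredundant
    obtain ⟨j, hj, -⟩ := hcover 0
    obtain ⟨x, hx⟩ := hredundant j hj
    have hxj : x ∈ p j := by
      obtain ⟨i, hi, hxi⟩ := hcover x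
      by_contra hxj
      exact hx i (Finset.mem_erase.mpr ⟨fun h => hxj (h ▸ hxi), hi⟩) hxi
    obtain ⟨y, hyj⟩ := SetLike.exists_not_mem_of_ne_top _ (hp j hj) rfl
    calc Fintype.card K ≤ (s.erase j).card :=
          card_le_card_erase_of_forall_exists_mem hcover hxj hyj hx
      _ < s.card := Finset.card_erase_lt_of_mem hj

end Submodule

theorem covering_by_proper_subspaces_gt_card_general
    (K V : Type*) [Field K] [Fintype K] [AddCommGroup V] [Module K V]
    {m : ℕ} (U : Fin m → Submodule K V)
    (hproper : ∀ i, U i < ⊤)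
    (hcover : ∀ v : V, ∃ i, v ∈ U i) :
    m > Fintype.card K := by
  simpa using Submodule.card_lt_card_of_forall_exists_mem (s := Finset.univ)
    (fun i _ => (hproper i).ne) (fun v => (hcover v).imp fun i hi => ⟨Finset.mem_univ i, hi⟩)

/-- If a nonzero finite-dimensional vector space `V` over a finite field `K` is covered by
proper subspaces `U 1, …, U m`, then `m > |K|`. -/
theorem covering_by_proper_subspaces_gt_card
    (K V : Type*) [Field K] [Fintype K] [AddCommGroup V] [Module K V]
    [FiniteDimensional K V] [Nontrivial V]
    {m : ℕ} (U : Fin m → Submodule K V)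
    (hproper : ∀ i, U i < ⊤)
    (hcover : ∀ v : V, ∃ i, v ∈ U i) :
    m > Fintype.card K :=
  covering_by_proper_subspaces_gt_card_general K V U hproper hcover
end

section
/- Let K be a finite field with |K| = q, let V be a nonzero finite-dimensional vector space over K, and let W_1, …, W_{q+1} be proper subspaces of V with V = W_1 ∪ ⋯ ∪ W_{q+1}. Then there exists a subspace S ⊂ V of codimension 2 in V such that {W_1, …, W_{q+1}} is exactly the set of all hyperplanes of V (subspaces of codimension 1 in V) containing S, and moreover ∑_{i=1}^{q+1} 1_{W_i} = 1_V + q·1_S as functions on V. -/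
open Finset
open scoped Classical

section Aux

variable {K V : Type*} [Field K] [Fintype K] [AddCommGroup V] [Module K V]

/-- A cover of `V` by proper subspaces indexed by a finset must have at least
`card K + 1` members. -/
lemma aux_card_cover {n : ℕ} (W : Fin n → Submodule K V) (hproper : ∀ i, W i < ⊤)
    (T : Finset (Fin n)) (hT : ∀ v : V, ∃ i ∈ T, v ∈ W i) :
    Fintype.card K + 1 ≤ T.card := by
  classical
  obtain ⟨T', hT'm, hmin⟩ := Finset.exists_min_image
    (T.powerset.filter fun T' => ∀ v : V, ∃ i ∈ T', v ∈ W i) Finset.card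
    ⟨T, by simp only [Finset.mem_filter, Finset.mem_powerset]; exact ⟨subset_rfl, hT⟩⟩
  rw [Finset.mem_filter, Finset.mem_powerset] at hT'm
  obtain ⟨hT'sub, hT'cov⟩ := hT'm
  obtain ⟨i₀, hi₀T, _⟩ := hT'cov 0
  have herase : ¬ ∀ v : V, ∃ i ∈ T'.erase i₀, v ∈ W i := by
    intro hcov
    have hmem : T'.erase i₀ ∈
        T.powerset.filter fun T'' => ∀ v : V, ∃ i ∈ T'', v ∈ W i :=
      Finset.mem_filter.2
        ⟨Finset.mem_powerset.2 ((Finset.erase_subset _ _).trans hT'sub), hcov⟩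
    have h1 := hmin _ hmem
    have h2 := Finset.card_erase_of_mem hi₀T
    have h3 : 1 ≤ T'.card := Finset.card_pos.2 ⟨i₀, hi₀T⟩
    omega
  push_neg at herase
  obtain ⟨x, hx⟩ := herase
  obtain ⟨ix, hixT, hixW⟩ := hT'cov x
  have hix : ix = i₀ := by
    by_contra hne
    exact hx ix (Finset.mem_erase.2 ⟨hne, hixT⟩) hixW
  subst hix
  have hxess : ∀ j ∈ T', j ≠ ix → x ∉ W j := fun j hj hne =>
    hx j (Finset.mem_erase.2 ⟨hne, hj⟩)
  obtain ⟨y, -, hy⟩ := SetLike.exists_of_lt (hproper ix)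
  choose g hgT hgW using fun l : K => hT'cov (y + l • x)
  have hgne : ∀ l, g l ≠ ix := by
    intro l h
    apply hy
    have h1 : y + l • x ∈ W ix := h ▸ hgW l
    have h2 : l • x ∈ W ix := Submodule.smul_mem _ _ hixW
    simpa using (W ix).sub_mem h1 h2
  have hinj : Set.InjOn g ↑(Finset.univ : Finset K) := by
    intro l _ m _ hlm
    by_contra hne
    have h1 : y + l • x ∈ W (g m) := hlm ▸ hgW l
    have h2 : (l - m) • x ∈ W (g m) := by
      have := (W (g m)).sub_mem h1 (hgW m)
      simpa [← sub_smul, add_sub_add_left_eq_sub] using this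
    have hx' : x ∈ W (g m) := by
      have : (l - m)⁻¹ • ((l - m) • x) ∈ W (g m) := Submodule.smul_mem _ _ h2
      rwa [smul_smul, inv_mul_cancel₀ (sub_ne_zero.2 hne), one_smul] at this
    exact hxess (g m) (hgT m) (hgne m) hx'
  have hmaps : ∀ l ∈ (Finset.univ : Finset K), g l ∈ T'.erase ix :=
    fun l _ => Finset.mem_erase.2 ⟨hgne l, hgT l⟩
  have hcard := Finset.card_le_card_of_injOn g hmaps hinj
  rw [Finset.card_univ, Finset.card_erase_of_mem hi₀T] at hcard
  have h3 : 1 ≤ T'.card := Finset.card_pos.2 ⟨ix, hi₀T⟩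
  have h4 : T'.card ≤ T.card := Finset.card_le_card hT'sub
  omega

/-- every `W k` has an "essential" point, lying in no other `W j`. -/
lemma aux_essential (W : Fin (Fintype.card K + 1) → Submodule K V)
    (hproper : ∀ i, W i < ⊤) (hcover : ∀ v : V, ∃ i, v ∈ W i)
    (k : Fin (Fintype.card K + 1)) :
    ∃ x, x ∈ W k ∧ ∀ j, j ≠ k → x ∉ W j := by
  by_contra h
  push_neg at h
  have hT : ∀ v : V, ∃ i ∈ Finset.univ.erase k, v ∈ W i := by
    intro v
    obtain ⟨i, hi⟩ := hcover v
    by_cases hik : i = k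
    · obtain ⟨j, hjk, hjm⟩ := h v (hik ▸ hi)
      exact ⟨j, Finset.mem_erase.2 ⟨hjk, Finset.mem_univ _⟩, hjm⟩
    · exact ⟨i, Finset.mem_erase.2 ⟨hik, Finset.mem_univ _⟩, hi⟩
  have := aux_card_cover W hproper _ hT
  rw [Finset.card_erase_of_mem (Finset.mem_univ _), Finset.card_univ, Fintype.card_fin] at this
  omega

/-- The parametrized family `v + l • x` selects, injectively and surjectively,
the subspaces other than `W k`, when `x` is essential for `W k` and `v ∉ W k`. -/
lemma aux_exists_g (W : Fin (Fintype.card K + 1) → Submodule K V)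
    (hcover : ∀ v : V, ∃ i, v ∈ W i)
    {x : V} {k : Fin (Fintype.card K + 1)} (hxmem : x ∈ W k)
    (hxk : ∀ j, j ≠ k → x ∉ W j) {v : V} (hv : v ∉ W k) :
    ∃ g : K → Fin (Fintype.card K + 1),
      (∀ l : K, v + l • x ∈ W (g l)) ∧ (∀ l, g l ≠ k) ∧
      (∀ j, j ≠ k → ∃ l, g l = j) := by
  choose g hg using fun l : K => hcover (v + l • x)
  have hgk : ∀ l, g l ≠ k := by
    intro l h
    apply hv
    have h1 : v + l • x ∈ W k := h ▸ hg l
    have h2 : l • x ∈ W k := Submodule.smul_mem _ _ hxmem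
    simpa using (W k).sub_mem h1 h2
  refine ⟨g, hg, hgk, ?_⟩
  have hinj : Function.Injective g := by
    intro l m hlm
    by_contra hne
    have h1 : v + l • x ∈ W (g m) := hlm ▸ hg l
    have h2 : (l - m) • x ∈ W (g m) := by
      have := (W (g m)).sub_mem h1 (hg m)
      simpa [← sub_smul, add_sub_add_left_eq_sub] using this
    have hx' : x ∈ W (g m) := by
      have : (l - m)⁻¹ • ((l - m) • x) ∈ W (g m) := Submodule.smul_mem _ _ h2
      rwa [smul_smul, inv_mul_cancel₀ (sub_ne_zero.2 hne), one_smul] at this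
    exact hxk (g m) (hgk m) hx'
  have himg : Finset.univ.image g = Finset.univ.erase k := by
    apply Finset.eq_of_subset_of_card_le
    · intro j hj
      obtain ⟨l, -, rfl⟩ := Finset.mem_image.1 hj
      exact Finset.mem_erase.2 ⟨hgk l, Finset.mem_univ _⟩
    · rw [Finset.card_erase_of_mem (Finset.mem_univ _),
        Finset.card_image_of_injective _ hinj, Finset.card_univ, Finset.card_univ,
        Fintype.card_fin]
      omega
  intro j hjk
  have : j ∈ Finset.univ.image g := by
    rw [himg]; exact Finset.mem_erase.2 ⟨hjk, Finset.mem_univ _⟩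
  obtain ⟨l, -, hl⟩ := Finset.mem_image.1 this
  exact ⟨l, hl⟩

/-- Adjoining a vector outside a subspace raises the finrank by exactly one. -/
lemma aux_rank_step [FiniteDimensional K V] (p : Submodule K V) {x : V} (hx : x ∉ p) :
    Module.finrank K ↥(p ⊔ Submodule.span K {x}) = Module.finrank K ↥p + 1 := by
  have hx0 : x ≠ 0 := fun h => hx (h ▸ p.zero_mem)
  have hinf : p ⊓ Submodule.span K {x} = ⊥ := by
    rw [eq_bot_iff]
    rintro z hz
    obtain ⟨hzp, hzx⟩ := Submodule.mem_inf.1 hz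
    obtain ⟨c, rfl⟩ := Submodule.mem_span_singleton.1 hzx
    rcases eq_or_ne c 0 with rfl | hc
    · simp
    · exact absurd (by
        have : c⁻¹ • (c • x) ∈ p := Submodule.smul_mem _ _ hzp
        rwa [smul_smul, inv_mul_cancel₀ hc, one_smul] at this) hx
  have h := Submodule.finrank_sup_add_finrank_inf_eq p (Submodule.span K {x})
  rw [hinf, finrank_span_singleton hx0] at h
  simpa using h

end Aux

/-- If a nonzero finite-dimensional vector space `V` over a finite field `K` of cardinality `q`
is covered by `q + 1` proper subspaces `W 1, …, W (q+1)`, then there is a subspace `S` of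
codimension `2` such that the `W i` are exactly the hyperplanes of `V` containing `S`, and
`∑ i, 1_{W i} = 1_V + q • 1_S`. -/
theorem covering_by_card_add_one_proper_subspaces
    (K V : Type*) [Field K] [Fintype K] [AddCommGroup V] [Module K V]
    [FiniteDimensional K V] [Nontrivial V]
    (W : Fin (Fintype.card K + 1) → Submodule K V)
    (hproper : ∀ i, W i < ⊤)
    (hcover : ∀ v : V, ∃ i, v ∈ W i) :
    ∃ S : Submodule K V,
      Module.finrank K S + 2 = Module.finrank K V ∧
      (∀ H : Submodule K V,
        (S ≤ H ∧ Module.finrank K H + 1 = Module.finrank K V) ↔ ∃ i, H = W i) ∧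
      (∀ v : V,
        ∑ i, (if v ∈ W i then (1 : ℝ) else 0) =
          1 + (Fintype.card K : ℝ) * (if v ∈ S then 1 else 0)) := by
  classical
  have hq : 2 ≤ Fintype.card K := Fintype.one_lt_card
  have hcardFin : 1 < Fintype.card (Fin (Fintype.card K + 1)) := by
    rw [Fintype.card_fin]; omega
  -- essential points
  choose xs hxsmem hxsess using aux_essential W hproper hcover
  set S : Submodule K V := ⨅ i, W i with hSdef
  have hSle : ∀ i, S ≤ W i := fun i => iInf_le _ i
  have hmemS : ∀ {z : V}, (∀ i, z ∈ W i) → z ∈ S := by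
    intro z h; rw [hSdef, Submodule.mem_iInf]; exact h
  -- uniqueness of the covering subspace outside S
  have huniq : ∀ v : V, v ∉ S → ∃! i, v ∈ W i := by
    intro v hvS
    have : ∃ k, v ∉ W k := by
      by_contra h
      push_neg at h
      exact hvS (hmemS h)
    obtain ⟨k, hk⟩ := this
    obtain ⟨g, hg1, hg2, hg3⟩ := aux_exists_g W hcover (hxsmem k) (hxsess k) hk
    obtain ⟨i₀, hi₀⟩ := hcover v
    have hzero : ∀ j, v ∈ W j → g 0 = j := by
      intro j hj
      have hjk : j ≠ k := fun h => hk (h ▸ hj)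
      obtain ⟨l, hl⟩ := hg3 j hjk
      have hlx : l • xs k ∈ W j := by
        have h1 : v + l • xs k ∈ W j := hl ▸ hg1 l
        simpa using (W j).sub_mem h1 hj
      rcases eq_or_ne l 0 with rfl | hl0
      · exact hl
      · exfalso
        apply hxsess k j hjk
        have : l⁻¹ • (l • xs k) ∈ W j := Submodule.smul_mem _ _ hlx
        rwa [smul_smul, inv_mul_cancel₀ hl0, one_smul] at this
    exact ⟨i₀, hi₀, fun j hj => (hzero j hj).symm.trans (hzero i₀ hi₀)⟩
  -- membership in two distinct subspaces forces membership in S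
  have hinf : ∀ {a b : Fin (Fintype.card K + 1)}, a ≠ b →
      ∀ {z : V}, z ∈ W a → z ∈ W b → z ∈ S := by
    intro a b hab z ha hb
    by_contra hzS
    obtain ⟨i, -, hu⟩ := huniq z hzS
    exact hab ((hu a ha).trans (hu b hb).symm)
  -- each W a is S plus the line through its essential point
  have hWle : ∀ a, W a ≤ S ⊔ Submodule.span K {xs a} := by
    intro a z hz
    obtain ⟨b, hba⟩ := Fintype.exists_ne_of_one_lt_card hcardFin a
    obtain ⟨j, hj⟩ := hcover (z + xs b)
    by_cases hjb : j = b
    · -- z ∈ W b, hence z ∈ S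
      have hzb : z ∈ W b := by
        have h1 : z + xs b ∈ W b := hjb ▸ hj
        simpa using (W b).sub_mem h1 (hxsmem b)
      exact Submodule.mem_sup_left (hinf hba.symm hz hzb)
    · have hja : j ≠ a := by
        intro h
        apply hxsess b a hba.symm
        have h1 : z + xs b ∈ W a := h ▸ hj
        simpa using (W a).sub_mem h1 hz
      have hva : xs a ∉ W b := hxsess a b hba
      obtain ⟨g, hg1, hg2, hg3⟩ := aux_exists_g W hcover (hxsmem b) (hxsess b) hva
      obtain ⟨l, hl⟩ := hg3 j hjb
      have hl0 : l ≠ 0 := by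
        rintro rfl
        apply hxsess a j hja
        have h0 := hg1 0
        rw [hl] at h0
        simpa using h0
      have h1 : xs a + l • xs b ∈ W j := hl ▸ hg1 l
      have h2 : l • (z + xs b) ∈ W j := Submodule.smul_mem _ _ hj
      have h3 : l • z - xs a ∈ W j := by
        have := (W j).sub_mem h2 h1
        have heq : l • (z + xs b) - (xs a + l • xs b) = l • z - xs a := by
          rw [smul_add]; abel
        rwa [heq] at this
      have h4 : l • z - xs a ∈ W a :=
        (W a).sub_mem (Submodule.smul_mem _ _ hz) (hxsmem a)
      have h5 : l • z - xs a ∈ S := hinf hja h3 h4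
      have hzeq : z = l⁻¹ • ((l • z - xs a) + xs a) := by
        rw [sub_add_cancel, smul_smul, inv_mul_cancel₀ hl0, one_smul]
      rw [hzeq]
      exact Submodule.smul_mem _ _ (Submodule.add_mem _
        (Submodule.mem_sup_left h5)
        (Submodule.mem_sup_right (Submodule.mem_span_singleton_self _)))
  have hxsS : ∀ a, xs a ∉ S := by
    intro a h
    obtain ⟨b, hba⟩ := Fintype.exists_ne_of_one_lt_card hcardFin a
    exact hxsess a b hba (hSle b h)
  have hWeq : ∀ a, W a = S ⊔ Submodule.span K {xs a} := by
    intro a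
    refine le_antisymm (hWle a) (sup_le (hSle a) ?_)
    rw [Submodule.span_singleton_le_iff_mem]
    exact hxsmem a
  have hWrank : ∀ a, Module.finrank K ↥(W a) = Module.finrank K ↥S + 1 := by
    intro a
    rw [hWeq a]
    exact aux_rank_step S (hxsS a)
  -- two distinguished indices
  set i0 : Fin (Fintype.card K + 1) := ⟨0, by omega⟩ with hi0def
  set i1 : Fin (Fintype.card K + 1) := ⟨1, by omega⟩ with hi1def
  have h01 : i0 ≠ i1 := by simp [hi0def, hi1def, Fin.ext_iff]
  set x := xs i0 with hxdef
  set y := xs i1 with hydef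
  -- the whole space is S plus the plane spanned by x and y
  have hP : ∀ i, W i ≤ S ⊔ Submodule.span K {x} ⊔ Submodule.span K {y} := by
    intro i
    have hSP : S ≤ S ⊔ Submodule.span K {x} ⊔ Submodule.span K {y} :=
      le_trans le_sup_left le_sup_left
    by_cases hi0' : i = i0
    · rw [hi0']
      exact le_trans (hWle i0) (sup_le hSP (le_trans le_sup_right le_sup_left))
    by_cases hi1' : i = i1
    · rw [hi1']
      exact le_trans (hWle i1) (sup_le hSP le_sup_right)
    · -- xs i is in the plane
      have hva : x ∉ W i1 := hxsess i0 i1 h01.symm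
      obtain ⟨g, hg1, hg2, hg3⟩ := aux_exists_g W hcover (hxsmem i1) (hxsess i1) hva
      obtain ⟨l, hl⟩ := hg3 i hi1'
      have hl0 : l ≠ 0 := by
        rintro rfl
        apply hxsess i0 i hi0'
        have h0 := hg1 0
        rw [hl] at h0
        simpa using h0
      have h1 : x + l • y ∈ W i := hl ▸ hg1 l
      obtain ⟨s, hs, w, hw, hsw⟩ := Submodule.mem_sup.1 (hWle i h1)
      obtain ⟨c, rfl⟩ := Submodule.mem_span_singleton.1 hw
      have hc0 : c ≠ 0 := by
        rintro rfl
        apply hva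
        have hxy : x + l • y ∈ S := by
          rw [← hsw]; simpa using hs
        have : x + l • y ∈ W i1 := hSle i1 hxy
        have h2 : l • y ∈ W i1 := Submodule.smul_mem _ _ (hxsmem i1)
        simpa using (W i1).sub_mem this h2
      have hxsiP : xs i ∈ S ⊔ Submodule.span K {x} ⊔ Submodule.span K {y} := by
        have hxi : xs i = c⁻¹ • (x + l • y - s) := by
          rw [← hsw]
          rw [add_sub_cancel_left, smul_smul, inv_mul_cancel₀ hc0, one_smul]
        rw [hxi]
        refine Submodule.smul_mem _ _ ?_
        refine Submodule.sub_mem _ (Submodule.add_mem _ ?_ ?_) (hSP hs)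
        · exact Submodule.mem_sup_left
            (Submodule.mem_sup_right (Submodule.mem_span_singleton_self x))
        · exact Submodule.mem_sup_right
            (Submodule.smul_mem _ _ (Submodule.mem_span_singleton_self y))
      refine le_trans (hWle i) (sup_le hSP ?_)
      rw [Submodule.span_singleton_le_iff_mem]
      exact hxsiP
  have hTop : S ⊔ Submodule.span K {x} ⊔ Submodule.span K {y} = ⊤ := by
    refine le_antisymm le_top ?_
    intro v _
    obtain ⟨i, hi⟩ := hcover v
    exact hP i hi
  -- finrank computation
  have hxW1 : x ∉ W i1 := hxsess i0 i1 h01.symm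
  have hySnot : y ∉ S := hxsS i1
  have hrank1 : Module.finrank K ↥(S ⊔ Submodule.span K {y}) = Module.finrank K ↥S + 1 :=
    aux_rank_step S hySnot
  have hxnot : x ∉ S ⊔ Submodule.span K {y} := by
    rw [← hWeq i1]; exact hxW1
  have hrank2 : Module.finrank K ↥(S ⊔ Submodule.span K {y} ⊔ Submodule.span K {x}) =
      Module.finrank K ↥S + 2 := by
    rw [aux_rank_step _ hxnot, hrank1]
  have hTop' : S ⊔ Submodule.span K {y} ⊔ Submodule.span K {x} = ⊤ := by
    rw [← hTop]
    rw [sup_assoc, sup_assoc, sup_comm (Submodule.span K {y}) (Submodule.span K {x})]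
  have hrankS : Module.finrank K ↥S + 2 = Module.finrank K V := by
    rw [← hrank2, hTop', finrank_top]
  refine ⟨S, hrankS, ?_, ?_⟩
  · -- hyperplane classification
    intro H
    constructor
    · rintro ⟨hSH, hH⟩
      have hHrank : Module.finrank K ↥H = Module.finrank K ↥S + 1 := by omega
      have hnotle : ¬ H ≤ S := by
        intro h
        have := Submodule.finrank_mono h
        omega
      have : ∃ z, z ∈ H ∧ z ∉ S := by
        by_contra h
        push_neg at h
        exact hnotle h
      obtain ⟨z, hzH, hzS⟩ := this
      obtain ⟨i, hi⟩ := hcover z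
      obtain ⟨s, hs, w, hw, hsw⟩ := Submodule.mem_sup.1 (hWle i hi)
      obtain ⟨c, rfl⟩ := Submodule.mem_span_singleton.1 hw
      have hc0 : c ≠ 0 := by
        rintro rfl
        exact hzS (by rw [← hsw]; simpa using hs)
      have hxsiH : xs i ∈ H := by
        have hxi : xs i = c⁻¹ • (z - s) := by
          rw [← hsw, add_sub_cancel_left, smul_smul, inv_mul_cancel₀ hc0, one_smul]
        rw [hxi]
        exact Submodule.smul_mem _ _ (Submodule.sub_mem _ hzH (hSH hs))
      have hWiH : W i ≤ H := by
        rw [hWeq i]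
        refine sup_le hSH ?_
        rw [Submodule.span_singleton_le_iff_mem]
        exact hxsiH
      refine ⟨i, (Submodule.eq_of_le_of_finrank_le hWiH ?_).symm⟩
      rw [hWrank i, hHrank]
    · rintro ⟨i, rfl⟩
      exact ⟨hSle i, by rw [hWrank i]; omega⟩
  · -- the indicator identity
    intro v
    by_cases hv : v ∈ S
    · rw [if_pos hv]
      have : ∀ i ∈ Finset.univ, (if v ∈ W i then (1 : ℝ) else 0) = 1 :=
        fun i _ => if_pos (hSle i hv)
      rw [Finset.sum_congr rfl this, Finset.sum_const, Finset.card_univ, Fintype.card_fin]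
      push_cast
      ring
    · rw [if_neg hv]
      obtain ⟨i₀, hi₀, hu⟩ := huniq v hv
      rw [Finset.sum_boole]
      have hfilter : Finset.univ.filter (fun i => v ∈ W i) = {i₀} := by
        ext j
        simp only [Finset.mem_filter, Finset.mem_univ, true_and, Finset.mem_singleton]
        exact ⟨fun h => hu j h, fun h => h ▸ hi₀⟩
      rw [hfilter]
      simp
end

section
/- Let K be a finite field with |K| = q and let W be a finite-dimensional K-vector space. Let (U,V) be a pair of tuples of length m = q+1 of Type A, i.e., there exist a subspace S ⊆ W and linearly independent vectors a, b ∈ W with S ∩ span{a,b} = {0}, such that V_1 = ⋯ = V_q = S + span{a,b}, V_{q+1} = S, and U_1, …, U_{q+1} are the q+1 subspaces S + span{α a + β b} as [α : β] ranges over the q+1 points of the projective line over K. Then (U,V) is a nontrivial solution of the isometry equation, i.e., ∑_{i=1}^{q+1} (1/|V_i|)·1_{V_i} = ∑_{i=1}^{q+1} (1/|U_i|)·1_{U_i} holds and there is no permutation π of {1,…,q+1} with V_i = U_{π(i)} for all i. -/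
open Finset
open scoped Classical

/-- The pair of tuples `(U, V)` is a solution of the isometry equation
`∑ i, (1/|V i|) • 1_{V i} = ∑ i, (1/|U i|) • 1_{U i}` as real-valued functions on `W`. -/
def IsometrySolution {K W : Type*} [Field K] [AddCommGroup W] [Module K W]
    {m : ℕ} (U V : Fin m → Submodule K W) : Prop :=
  ∀ w : W,
    ∑ i, ((Nat.card ↥(V i) : ℝ))⁻¹ * (if w ∈ V i then 1 else 0) =
    ∑ i, ((Nat.card ↥(U i) : ℝ))⁻¹ * (if w ∈ U i then 1 else 0)

/-- Two tuples of subspaces are equivalent if one is a permutation of the other. -/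
def TuplesEquiv {K W : Type*} [Field K] [AddCommGroup W] [Module K W]
    {m : ℕ} (U V : Fin m → Submodule K W) : Prop :=
  ∃ π : Equiv.Perm (Fin m), ∀ i, V i = U (π i)


/-!
Write `P = span {a, b}` and `d = dim S`, so that `|S| = q ^ d`, `|S + P| = q ^ (d + 2)` and
`|U i| = q ^ (d + 1)`. Since `S ∩ P = 0`, a vector `s + x • a + y • b` with `s ∈ S` lies in
`U i` exactly when `(x, y)` is proportional to `(α i, β i)`; as the `q + 1` pairwise distinct
points `[α i : β i]` exhaust the projective line, a vector of `S + P` outside `S` lies in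
exactly one `U i`. At a vector of `S` the equation reads
`q / q ^ (d + 2) + 1 / q ^ d = (q + 1) / q ^ (d + 1)`, at a vector of `(S + P) \ S` it reads
`q / q ^ (d + 2) = 1 / q ^ (d + 1)`, and both sides vanish outside `S + P`.
The solution is nontrivial because `V (q + 1) = S` is properly contained in every `U i`.
-/

namespace Submodule

theorem add_mem_sup_iff_of_disjoint {R M : Type*} [Ring R] [AddCommGroup M] [Module R M]
    {S P L : Submodule R M} (hSP : Disjoint S P) (hLP : L ≤ P) {s p : M} (hs : s ∈ S)
    (hp : p ∈ P) : s + p ∈ S ⊔ L ↔ p ∈ L := by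
  refine ⟨fun h => ?_, fun h => add_mem_sup hs h⟩
  obtain ⟨s', hs', l, hl, hsl⟩ := mem_sup.1 h
  have hps : p - l ∈ S := by
    rw [sub_eq_sub_iff_add_eq_add.2 (by rw [hsl, add_comm])]
    exact sub_mem hs' hs
  have hpl : p - l = 0 := disjoint_def.1 hSP _ hps (sub_mem hp (hLP hl))
  rwa [sub_eq_zero.1 hpl]

theorem finrank_sup_of_disjoint {K V : Type*} [DivisionRing K] [AddCommGroup V] [Module K V]
    {S T : Submodule K V} [FiniteDimensional K S] [FiniteDimensional K T] (h : Disjoint S T) :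
    Module.finrank K ↥(S ⊔ T) = Module.finrank K S + Module.finrank K T := by
  rw [← finrank_sup_add_finrank_inf_eq, h.eq_bot, finrank_bot, add_zero]

theorem natCard_eq_pow_finrank {K V : Type*} [DivisionRing K] [Fintype K] [AddCommGroup V]
    [Module K V] (p : Submodule K V) [FiniteDimensional K p] :
    Nat.card p = Fintype.card K ^ Module.finrank K p := by
  rw [Module.natCard_eq_pow_finrank (K := K), Nat.card_eq_fintype_card]

end Submodule

theorem LinearIndependent.injective_coprod_toSpanSingleton {R M : Type*} [Ring R]
    [AddCommGroup M] [Module R M] {a b : M} (hab : LinearIndependent R ![a, b]) :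
    Function.Injective
      ((LinearMap.toSpanSingleton R M a).coprod (LinearMap.toSpanSingleton R M b)) := by
  rw [← LinearMap.ker_eq_bot, LinearMap.ker_eq_bot']
  rintro ⟨x, y⟩ h
  obtain ⟨rfl, rfl⟩ := LinearIndependent.pair_iff.1 hab x y h
  rfl

theorem LinearMap.range_coprod_toSpanSingleton {R M : Type*} [Semiring R] [AddCommMonoid M]
    [Module R M] (a b : M) :
    range ((toSpanSingleton R M a).coprod (toSpanSingleton R M b)) = Submodule.span R {a, b} := by
  rw [range_coprod, range_toSpanSingleton, range_toSpanSingleton, Submodule.span_insert]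

open scoped LinearAlgebra.Projectivization

namespace Projectivization

variable {K V : Type*} [Field K] [AddCommGroup V] [Module K V]

theorem existsUnique_mem_span_singleton {ι : Type*} {u : ι → V} (hu : ∀ i, u i ≠ 0)
    (hbij : Function.Bijective fun i => mk K (u i) (hu i)) {x : V} (hx : x ≠ 0) :
    ∃! i, x ∈ K ∙ u i := by
  simp_rw [Submodule.mem_span_singleton, ← mk_eq_mk_iff' K x _ hx (hu _),
    eq_comm (a := mk K x hx)]
  exact hbij.existsUnique _

theorem bijective_mk_prod_of_mul_ne [Fintype K] {α β : Fin (Fintype.card K + 1) → K}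
    (hαβ : ∀ i, (α i, β i) ≠ 0) (hproj : ∀ i j, i ≠ j → α i * β j ≠ α j * β i) :
    Function.Bijective fun i => mk K (α i, β i) (hαβ i) := by
  have : Finite (ℙ K (K × K)) := (finite_iff_of_finite K _).2 inferInstance
  refine Function.Injective.bijective_of_nat_card_le (fun i j h => ?_) ?_
  · by_contra hij
    obtain ⟨c, hc⟩ := (mk_eq_mk_iff' K _ _ _ _).1 h
    simp only [Prod.smul_mk, Prod.mk.injEq, smul_eq_mul] at hc
    exact hproj i j hij (by rw [← hc.1, ← hc.2]; ring)
  · rw [card_of_finrank_two K (K × K) (by simp), Nat.card_eq_fintype_card,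
      Nat.card_eq_fintype_card, Fintype.card_fin]

end Projectivization

section SupSpanMap

open Submodule

variable {K V W : Type*} [Field K] [AddCommGroup V] [Module K V] [AddCommGroup W] [Module K W]
  {S : Submodule K W} {φ : V →ₗ[K] W}

theorem add_apply_mem_sup_span_map_iff (hφ : Function.Injective φ)
    (hS : Disjoint S (LinearMap.range φ)) {s : W} (hs : s ∈ S) (x u : V) :
    s + φ x ∈ S ⊔ K ∙ φ u ↔ x ∈ K ∙ u := by
  rw [add_mem_sup_iff_of_disjoint hS
    ((span_singleton_le_iff_mem _ _).2 (LinearMap.mem_range_self φ u)) hs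
    (LinearMap.mem_range_self φ x), mem_span_singleton, mem_span_singleton]
  simp_rw [← map_smul, hφ.eq_iff]

theorem existsUnique_mem_sup_span_map {ι : Type*} (hφ : Function.Injective φ)
    (hS : Disjoint S (LinearMap.range φ)) {u : ι → V} (hu : ∀ i, u i ≠ 0)
    (hbij : Function.Bijective fun i => Projectivization.mk K (u i) (hu i)) {w : W}
    (hw : w ∈ S ⊔ LinearMap.range φ) (hwS : w ∉ S) : ∃! i, w ∈ S ⊔ K ∙ φ (u i) := by
  obtain ⟨s, hs, _, ⟨x, rfl⟩, rfl⟩ := mem_sup.1 hw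
  have hx : x ≠ 0 := by
    rintro rfl
    simp [hs] at hwS
  simp_rw [add_apply_mem_sup_span_map_iff hφ hS hs]
  exact Projectivization.existsUnique_mem_span_singleton hu hbij hx

theorem card_filter_mem_sup_span_map {ι : Type*} [Fintype ι] (hφ : Function.Injective φ)
    (hS : Disjoint S (LinearMap.range φ)) {u : ι → V} (hu : ∀ i, u i ≠ 0)
    (hbij : Function.Bijective fun i => Projectivization.mk K (u i) (hu i)) (w : W) :
    #{i | w ∈ S ⊔ K ∙ φ (u i)} =
      if w ∈ S then Fintype.card ι else if w ∈ S ⊔ LinearMap.range φ then 1 else 0 := by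
  split_ifs with hwS hw
  · rw [filter_true_of_mem fun i _ => mem_sup_left hwS, card_univ]
  · obtain ⟨i, hi, huniq⟩ := existsUnique_mem_sup_span_map hφ hS hu hbij hw hwS
    exact card_eq_one.2 ⟨i, by ext j; simpa using ⟨huniq j, fun h => h ▸ hi⟩⟩
  · refine card_eq_zero.2 (filter_false_of_mem fun i _ hi => hw ?_)
    exact sup_le_sup_left ((span_singleton_le_iff_mem _ _).2 (LinearMap.mem_range_self φ _)) S hi

theorem sup_span_map_ne_self (hφ : Function.Injective φ) (hS : Disjoint S (LinearMap.range φ))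
    {u : V} (hu : u ≠ 0) : S ⊔ K ∙ φ u ≠ S := by
  rw [Ne, sup_eq_left, span_singleton_le_iff_mem]
  exact fun h =>
    hu ((map_eq_zero_iff φ hφ).1 (disjoint_def.1 hS _ h (LinearMap.mem_range_self φ u)))

theorem finrank_sup_span_map [FiniteDimensional K S] (hφ : Function.Injective φ)
    (hS : Disjoint S (LinearMap.range φ)) {u : V} (hu : u ≠ 0) :
    Module.finrank K ↥(S ⊔ K ∙ φ u) = Module.finrank K S + 1 := by
  rw [finrank_sup_of_disjoint (hS.mono_right ((span_singleton_le_iff_mem _ _).2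
    (LinearMap.mem_range_self φ u))), finrank_span_singleton ((map_ne_zero_iff φ hφ).2 hu)]

theorem finrank_sup_range [FiniteDimensional K S] [FiniteDimensional K V]
    (hφ : Function.Injective φ) (hS : Disjoint S (LinearMap.range φ)) :
    Module.finrank K ↥(S ⊔ LinearMap.range φ) = Module.finrank K S + Module.finrank K V := by
  rw [finrank_sup_of_disjoint hS, LinearMap.finrank_range_of_inj hφ]

end SupSpanMap

theorem sum_inv_natCard_mul_ite_of_natCard_eq {ι K W : Type*} [Fintype ι] [Field K]
    [AddCommGroup W] [Module K W] {U : ι → Submodule K W} {n : ℕ}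
    (h : ∀ i, Nat.card (U i) = n) (w : W) :
    ∑ i, ((Nat.card ↥(U i) : ℝ))⁻¹ * (if w ∈ U i then 1 else 0) =
      (n : ℝ)⁻¹ * #{i | w ∈ U i} := by
  simp_rw [h, ← mul_sum, sum_boole]

/-- A pair of Type A is a nontrivial solution of the isometry equation. -/
theorem typeA_is_nontrivial_solution
    (K W : Type*) [Field K] [Fintype K] [AddCommGroup W] [Module K W]
    [FiniteDimensional K W]
    (S : Submodule K W) (a b : W)
    (hab : LinearIndependent K ![a, b])
    (hSab : S ⊓ Submodule.span K {a, b} = ⊥)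
    (U V : Fin (Fintype.card K + 1) → Submodule K W)
    (hV : ∀ i, i ≠ Fin.last (Fintype.card K) → V i = S ⊔ Submodule.span K {a, b})
    (hVlast : V (Fin.last (Fintype.card K)) = S)
    -- the `U i` are the `q + 1` subspaces `S + span {α • a + β • b}` as `[α : β]`
    -- ranges over the projective line over `K`
    (α β : Fin (Fintype.card K + 1) → K)
    (hαβ : ∀ i, (α i, β i) ≠ 0)
    (hproj : ∀ i j, i ≠ j → α i * β j ≠ α j * β i)
    (hU : ∀ i, U i = S ⊔ Submodule.span K {α i • a + β i • b}) :
    IsometrySolution U V ∧ ¬ TuplesEquiv U V := by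
  let φ : K × K →ₗ[K] W :=
    (LinearMap.toSpanSingleton K W a).coprod (LinearMap.toSpanSingleton K W b)
  have hφ : Function.Injective φ := hab.injective_coprod_toSpanSingleton
  have hrange : LinearMap.range φ = Submodule.span K {a, b} :=
    LinearMap.range_coprod_toSpanSingleton a b
  have hS : Disjoint S (LinearMap.range φ) := by rwa [hrange, disjoint_iff]
  have hU' : ∀ i, U i = S ⊔ K ∙ φ (α i, β i) := hU
  have hbij := Projectivization.bijective_mk_prod_of_mul_ne hαβ hproj
  have hcardU : ∀ i, Nat.card (U i) = Fintype.card K ^ (Module.finrank K S + 1) := fun i => by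
    rw [hU', Submodule.natCard_eq_pow_finrank, finrank_sup_span_map hφ hS (hαβ i)]
  have hcardSP :
      Nat.card ↥(S ⊔ LinearMap.range φ) = Fintype.card K ^ (Module.finrank K S + 2) := by
    rw [Submodule.natCard_eq_pow_finrank, finrank_sup_range hφ hS, Module.finrank_prod,
      Module.finrank_self]
  refine ⟨fun w => ?_, ?_⟩
  · rw [sum_inv_natCard_mul_ite_of_natCard_eq hcardU]
    simp_rw [hU']
    rw [card_filter_mem_sup_span_map hφ hS hαβ hbij w, Fin.sum_univ_castSucc]
    simp only [fun i => hV _ (Fin.castSucc_ne_last i), hVlast, ← hrange, hcardSP,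
      Submodule.natCard_eq_pow_finrank S, sum_const, card_univ, Fintype.card_fin, nsmul_eq_mul]
    by_cases hwS : w ∈ S
    · simp only [hwS, Submodule.mem_sup_left hwS, if_true]
      push_cast
      field_simp
      ring
    · simp only [hwS, if_false]
      split_ifs <;> push_cast <;> field_simp <;> ring
  · rintro ⟨π, hπ⟩
    exact sup_span_map_ne_self hφ hS (hαβ _) ((hU' _).symm.trans ((hπ _).symm.trans hVlast))
end

section
/- Let K be a finite field with |K| = q, let W be a K-vector space of finite dimension at least 2, and let m be a positive integer. There exists a nontrivial solution (U,V) of the isometry equation with tuples of length m if and only if m ≥ q + 1. -/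
open Finset
open scoped Classical

/-!
If `m ≤ q`, cancel the subspaces common to both sides and take a subspace `T` minimal among
those left, say on the left. Summing the equation over the vectors of `T` weighs each `X` by
`|X ∩ T| / |X|`: `T` itself contributes `1`, while each of the at most `q` subspaces on the right
is not contained in `T` and contributes at most `1/q`; equality is impossible.

If `m ≥ q + 1`, the `q + 1` lines `L` of a plane `P` satisfy
`∑ q⁻¹ 1_L = q · q⁻² 1_P + 1_{0}`, and padding both sides with zero subspaces gives a
nontrivial solution of length `m`.
-/
section WeightedIndicator

variable {K W : Type*} [Field K] [AddCommGroup W] [Module K W]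

/-- One side of the isometry equation, for a multiset of subspaces: as multisets, permuted tuples
become equal (`tuplesEquiv_iff`). -/
noncomputable def weightedIndicator (A : Multiset (Submodule K W)) (w : W) : ℝ :=
  (A.map fun X : Submodule K W => (Nat.card X : ℝ)⁻¹ * if w ∈ X then 1 else 0).sum

@[simp]
lemma weightedIndicator_zero : weightedIndicator (0 : Multiset (Submodule K W)) = 0 := by
  ext
  simp [weightedIndicator]

lemma weightedIndicator_cons (X : Submodule K W) (A : Multiset (Submodule K W)) (w : W) :
    weightedIndicator (X ::ₘ A) w =
      (Nat.card X : ℝ)⁻¹ * (if w ∈ X then 1 else 0) + weightedIndicator A w := by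
  simp [weightedIndicator]

lemma weightedIndicator_add (A B : Multiset (Submodule K W)) :
    weightedIndicator (A + B) = weightedIndicator A + weightedIndicator B := by
  ext w
  simp [weightedIndicator]

lemma weightedIndicator_replicate (n : ℕ) (X : Submodule K W) (w : W) :
    weightedIndicator (Multiset.replicate n X) w =
      n * ((Nat.card X : ℝ)⁻¹ * if w ∈ X then 1 else 0) := by
  simp [weightedIndicator]

lemma weightedIndicator_map_univ {ι : Type*} [Fintype ι] (f : ι → Submodule K W) (w : W) :
    weightedIndicator (univ.val.map f) w =
      ∑ i, (Nat.card (f i) : ℝ)⁻¹ * if w ∈ f i then 1 else 0 := by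
  rw [weightedIndicator, Multiset.map_map]
  rfl

lemma isometrySolution_iff {m : ℕ} (U V : Fin m → Submodule K W) :
    IsometrySolution U V ↔
      weightedIndicator (univ.val.map V) = weightedIndicator (univ.val.map U) := by
  simp only [IsometrySolution, funext_iff, weightedIndicator_map_univ]

lemma sum_filter_mem_weightedIndicator [Fintype W] (A : Multiset (Submodule K W))
    (T : Submodule K W) :
    ∑ w ∈ univ.filter (· ∈ T), weightedIndicator A w =
      (A.map fun X => (Nat.card ↥(X ⊓ T) : ℝ) / Nat.card X).sum := by
  unfold weightedIndicator
  rw [Finset.sum_eq_multiset_sum, Multiset.sum_map_sum_map]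
  congr 1
  refine Multiset.map_congr rfl fun X _ => ?_
  rw [← Finset.sum_eq_multiset_sum, ← Finset.mul_sum, Finset.sum_boole, Finset.filter_filter,
    div_eq_inv_mul]
  simp [Nat.card_eq_fintype_card, Fintype.card_subtype, and_comm]

end WeightedIndicator

lemma exists_perm_eq_comp_of_map_univ_eq {ι α : Type*} [Fintype ι] {f g : ι → α}
    (h : univ.val.map f = univ.val.map g) : ∃ π : Equiv.Perm ι, ∀ i, f i = g (π i) := by
  have hfiber : ∀ a, Fintype.card {i // f i = a} = Fintype.card {i // g i = a} := fun a => by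
    have := congr_arg (Multiset.count a) h
    simp only [Multiset.count_map, Fintype.card_subtype, eq_comm (a := a)] at this ⊢
    exact this
  refine ⟨Equiv.ofFiberEquiv fun a => Fintype.equivOfCardEq (hfiber a), fun i => ?_⟩
  exact (Equiv.ofFiberEquiv_map _ i).symm

lemma tuplesEquiv_iff {K W : Type*} [Field K] [AddCommGroup W] [Module K W] {m : ℕ}
    (U V : Fin m → Submodule K W) : TuplesEquiv U V ↔ univ.val.map V = univ.val.map U := by
  refine ⟨fun ⟨π, hπ⟩ => ?_, exists_perm_eq_comp_of_map_univ_eq⟩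
  rw [funext hπ, ← Function.comp_def, ← Multiset.map_map, Multiset.map_univ_val_equiv]

lemma exists_fin_map_univ_eq {α : Type*} (A : Multiset α) {m : ℕ} (hA : A.card = m) :
    ∃ f : Fin m → α, univ.val.map f = A := by
  obtain ⟨l, rfl⟩ : ∃ l : List α, (l : Multiset α) = A := ⟨A.toList, A.coe_toList⟩
  rw [Multiset.coe_card] at hA
  subst hA
  exact ⟨l.get, by rw [Fin.univ_val_map, List.ofFn_get]⟩

section Uniqueness

variable {K W : Type*} [Field K] [Finite K] [AddCommGroup W] [Module K W]

lemma natCard_mul_natCard_le_of_lt [Module.Finite K W] {X Y : Submodule K W} (h : Y < X) :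
    Nat.card K * Nat.card Y ≤ Nat.card X := by
  rw [Module.natCard_eq_pow_finrank (K := K) (V := Y),
    Module.natCard_eq_pow_finrank (K := K) (V := X), ← pow_succ']
  exact Nat.pow_le_pow_right Nat.card_pos (Submodule.finrank_lt_finrank_of_lt h)

lemma natCard_inf_div_natCard_le_inv [Module.Finite K W] {X T : Submodule K W} (h : ¬ X ≤ T) :
    (Nat.card ↥(X ⊓ T) : ℝ) / Nat.card X ≤ (Nat.card K : ℝ)⁻¹ := by
  have hlt : X ⊓ T < X := inf_le_left.lt_of_ne fun he => h (he ▸ inf_le_right)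
  have : Finite W := Module.finite_of_finite K
  rw [div_le_iff₀ (by exact_mod_cast Nat.card_pos), ← div_eq_inv_mul,
    le_div_iff₀ (by exact_mod_cast Nat.card_pos), mul_comm]
  exact_mod_cast natCard_mul_natCard_le_of_lt hlt

variable [Fintype W]

lemma weightedIndicator_ne_of_disjoint {A B : Multiset (Submodule K W)} (hAB : Disjoint A B)
    (hcard : A.card = B.card) (hq : B.card ≤ Nat.card K) {T : Submodule K W} (hT : T ∈ A)
    (hmin : ∀ X ∈ B, ¬ X < T) : weightedIndicator A ≠ weightedIndicator B := by
  intro hAB_eq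
  set ratio : Submodule K W → ℝ := fun X => (Nat.card ↥(X ⊓ T) : ℝ) / Nat.card X
  have hsum : (A.map ratio).sum = (B.map ratio).sum := by
    rw [← sum_filter_mem_weightedIndicator, ← sum_filter_mem_weightedIndicator, hAB_eq]
  have hcard_pos : ∀ X : Submodule K W, (0 : ℝ) < Nat.card X := fun X => by
    exact_mod_cast Nat.card_pos
  have hratio_pos : ∀ X, 0 < ratio X := fun X => div_pos (hcard_pos _) (hcard_pos _)
  have hA : (A.map ratio).sum = 1 + ((A.erase T).map ratio).sum := by
    conv_lhs => rw [← Multiset.cons_erase hT]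
    simp [ratio]
  have hB : (B.map ratio).sum ≤ B.card * (Nat.card K : ℝ)⁻¹ := by
    have hle : ∀ r ∈ B.map ratio, r ≤ (Nat.card K : ℝ)⁻¹ := by
      simp only [Multiset.mem_map, forall_exists_index, and_imp]
      rintro _ X hX rfl
      refine natCard_inf_div_natCard_le_inv fun hXT => ?_
      exact hXT.lt_or_eq.elim (hmin X hX) fun h => Multiset.disjoint_left.mp hAB hT (h ▸ hX)
    simpa using Multiset.sum_le_card_nsmul _ _ hle
  have hq1 : (1 : ℝ) < Nat.card K := by exact_mod_cast Finite.one_lt_card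
  rcases (A.erase T).empty_or_exists_mem with hA0 | ⟨Y, hY⟩
  · have hB1 : B.card = 1 := by rw [← hcard, ← Multiset.cons_erase hT, hA0]; rfl
    rw [hA0, Multiset.map_zero, Multiset.sum_zero] at hA
    rw [hB1, Nat.cast_one, one_mul] at hB
    linarith [inv_lt_one_of_one_lt₀ hq1]
  · have hBq : (B.card : ℝ) * (Nat.card K : ℝ)⁻¹ ≤ 1 := by
      rw [← div_eq_mul_inv, div_le_one (by linarith)]
      exact_mod_cast hq
    have hrest : ratio Y ≤ ((A.erase T).map ratio).sum :=
      Multiset.single_le_sum (fun _ h => ?_) _ (Multiset.mem_map_of_mem _ hY)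
    · linarith [hratio_pos Y]
    · obtain ⟨X, -, rfl⟩ := Multiset.mem_map.mp h
      exact (hratio_pos X).le

lemma eq_of_weightedIndicator_eq_of_disjoint {A B : Multiset (Submodule K W)} (hAB : Disjoint A B)
    (h : weightedIndicator A = weightedIndicator B) (hcard : A.card = B.card)
    (hq : B.card ≤ Nat.card K) : A = B := by
  by_contra hne
  have hnonempty : (A + B).toFinset.Nonempty := by
    rw [Multiset.toFinset_nonempty]
    intro hzero
    obtain ⟨rfl, rfl⟩ := add_eq_zero.mp hzero
    exact hne rfl
  obtain ⟨T, hT⟩ := Finset.exists_minimal hnonempty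
  have hmin : ∀ X ∈ A + B, ¬ X < T := fun X hX => hT.not_lt (Multiset.mem_toFinset.mpr hX)
  rcases Multiset.mem_add.mp (Multiset.mem_toFinset.mp hT.prop) with hTA | hTB
  · exact weightedIndicator_ne_of_disjoint hAB hcard hq hTA
      (fun X hX => hmin X (Multiset.mem_add.mpr (.inr hX))) h
  · exact weightedIndicator_ne_of_disjoint hAB.symm hcard.symm (hcard ▸ hq) hTB
      (fun X hX => hmin X (Multiset.mem_add.mpr (.inl hX))) h.symm

theorem eq_of_weightedIndicator_eq {A B : Multiset (Submodule K W)}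
    (h : weightedIndicator A = weightedIndicator B) (hcard : A.card = B.card)
    (hq : B.card ≤ Nat.card K) : A = B := by
  induction A using Multiset.strongInductionOn generalizing B with
  | ih A ih =>
  by_cases hAB : Disjoint A B
  · exact eq_of_weightedIndicator_eq_of_disjoint hAB h hcard hq
  obtain ⟨X, hXA, hXB⟩ : ∃ X ∈ A, X ∈ B := by simpa [Multiset.disjoint_left] using hAB
  rw [← Multiset.cons_erase hXA, ← Multiset.cons_erase hXB] at h hcard ⊢
  congr 1
  refine ih _ (Multiset.erase_lt.mpr hXA) ?_ (by simpa using hcard) ?_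
  · ext w
    simpa [weightedIndicator_cons] using congr_fun h w
  · exact (Multiset.card_le_card (Multiset.erase_le X B)).trans hq

end Uniqueness

open scoped LinearAlgebra.Projectivization

section Construction

variable {K : Type*} [Field K]

lemma Projectivization.mem_submodule_iff_eq_mk {V : Type*} [AddCommGroup V] [Module K V]
    (p : ℙ K V) {v : V} (hv : v ≠ 0) : v ∈ p.submodule ↔ p = mk K v hv := by
  refine ⟨fun h => submodule_injective ?_, fun h => h ▸ Submodule.mem_span_singleton_self v⟩
  symm
  refine Submodule.eq_of_le_of_finrank_eq ((Submodule.span_singleton_le_iff_mem _ _).mpr h) ?_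
  rw [submodule_mk, finrank_span_singleton hv, finrank_submodule]

variable {W : Type*} [AddCommGroup W] [Module K W]

noncomputable def lineIn (P : Submodule K W) (p : ℙ K P) : Submodule K W :=
  p.submodule.map P.subtype

lemma sum_indicator_mem_lineIn (P : Submodule K W) [Fintype (ℙ K P)] (w : W) :
    ∑ p : ℙ K P, (if w ∈ lineIn P p then 1 else 0 : ℝ) =
      if w = 0 then (Nat.card (ℙ K P) : ℝ) else if w ∈ P then 1 else 0 := by
  by_cases hw0 : w = 0
  · simp [hw0, Nat.card_eq_fintype_card]
  by_cases hwP : w ∈ P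
  · have hv : (⟨w, hwP⟩ : P) ≠ 0 := by simpa using hw0
    have hmem : ∀ p, w ∈ lineIn P p ↔ p = .mk K _ hv := fun p => by
      rw [← Projectivization.mem_submodule_iff_eq_mk, lineIn, Submodule.mem_map]
      exact ⟨fun ⟨v, hv, hvw⟩ => (Subtype.ext hvw : v = ⟨w, hwP⟩) ▸ hv,
        fun h => ⟨_, h, rfl⟩⟩
    simp [hw0, hwP, hmem]
  · have : ∀ p, w ∉ lineIn P p := fun p h => hwP (Submodule.map_subtype_le P _ h)
    simp [this, hw0, hwP]

lemma natCard_lineIn (P : Submodule K W) (p : ℙ K P) : Nat.card (lineIn P p) = Nat.card K := by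
  rw [lineIn, ← Nat.card_congr (Submodule.equivMapOfInjective _ P.injective_subtype _).toEquiv,
    Module.natCard_eq_pow_finrank (K := K), p.finrank_submodule, pow_one]

lemma exists_submodule_finrank_eq {n : ℕ} (hn : n ≤ Module.finrank K W) :
    ∃ P : Submodule K W, Module.finrank K P = n := by
  obtain ⟨f, hf⟩ := exists_linearIndependent_of_le_finrank hn
  exact ⟨Submodule.span K (Set.range f), by rw [finrank_span_eq_card hf, Fintype.card_fin]⟩

variable [Finite K]

/-- Both sides are `1 + 1/q` at `0`, `1/q` elsewhere on `P`, and `0` off `P`. -/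
theorem weightedIndicator_lines_eq {P : Submodule K W} (hP : Module.finrank K P = 2)
    [Fintype (ℙ K P)] :
    weightedIndicator (univ.val.map (lineIn P)) =
      weightedIndicator (Multiset.replicate (Nat.card K) P + {⊥}) := by
  have : Module.Finite K P := Module.finite_of_finrank_pos (hP ▸ two_pos)
  have hcardP : Nat.card P = Nat.card K ^ 2 := by rw [Module.natCard_eq_pow_finrank (K := K), hP]
  have hq : (Nat.card K : ℝ) ≠ 0 := by exact_mod_cast Nat.card_pos.ne'
  ext w
  rw [weightedIndicator_map_univ, weightedIndicator_add, Pi.add_apply, weightedIndicator_replicate,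
    ← Multiset.cons_zero, weightedIndicator_cons]
  simp only [natCard_lineIn, ← Finset.mul_sum, sum_indicator_mem_lineIn,
    Projectivization.card_of_finrank_two K P hP, hcardP]
  by_cases hw0 : w = 0
  · simp [hw0]
    field_simp
    ring
  by_cases hwP : w ∈ P
  · simp [hw0, hwP]
    field_simp
  · simp [hw0, hwP]

theorem exists_ne_weightedIndicator_eq (hdim : 1 < Module.finrank K W) {m : ℕ}
    (hm : Nat.card K + 1 ≤ m) :
    ∃ A B : Multiset (Submodule K W), A.card = m ∧ B.card = m ∧
      weightedIndicator A = weightedIndicator B ∧ A ≠ B := by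
  obtain ⟨P, hP⟩ := exists_submodule_finrank_eq hdim
  have : Module.Finite K P := Module.finite_of_finrank_pos (hP ▸ two_pos)
  have : Finite P := Module.finite_of_finite K
  let := Fintype.ofFinite (ℙ K P)
  set padding := Multiset.replicate (m - (Nat.card K + 1)) (⊥ : Submodule K W)
  refine ⟨univ.val.map (lineIn P) + padding, Multiset.replicate (Nat.card K) P + {⊥} + padding,
    ?_, ?_, ?_, fun h => ?_⟩
  · simp [padding, ← Nat.card_eq_fintype_card, Projectivization.card_of_finrank_two K P hP]
    omega
  · simp [padding]
    omega
  · rw [weightedIndicator_add, weightedIndicator_add, weightedIndicator_lines_eq hP]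
  · have hPmem : P ∈ Multiset.replicate (Nat.card K) P + {⊥} + padding := by
      simp [Multiset.mem_replicate, Nat.card_pos.ne']
    rw [← h] at hPmem
    simp only [Multiset.mem_add, Multiset.mem_map, Multiset.mem_replicate, padding] at hPmem
    rcases hPmem with ⟨p, -, hp⟩ | ⟨-, hbot⟩
    · have := Submodule.finrank_map_subtype_eq P p.submodule
      rw [← lineIn, hp, hP, p.finrank_submodule] at this
      exact absurd this (by norm_num)
    · rw [hbot, finrank_bot] at hP
      exact absurd hP (by norm_num)

end Construction

theorem exists_nontrivial_solution_iff_general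
    (K W : Type*) [Field K] [Fintype K] [AddCommGroup W] [Module K W]
    [FiniteDimensional K W] (hdim : 1 < Module.finrank K W)
    (m : ℕ) :
    (∃ U V : Fin m → Submodule K W, IsometrySolution U V ∧ ¬ TuplesEquiv U V) ↔
      m ≥ Fintype.card K + 1 := by
  rw [← Nat.card_eq_fintype_card]
  constructor
  · rintro ⟨U, V, hsol, hne⟩
    by_contra! hm
    have : Finite W := Module.finite_of_finite K
    let := Fintype.ofFinite W
    refine hne <| (tuplesEquiv_iff U V).mpr <|
      eq_of_weightedIndicator_eq ((isometrySolution_iff U V).mp hsol) (by simp) ?_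
    simpa using Nat.le_of_lt_succ hm
  · intro hm
    obtain ⟨A, B, hA, hB, hAB, hne⟩ := exists_ne_weightedIndicator_eq hdim hm
    obtain ⟨V, rfl⟩ := exists_fin_map_univ_eq A hA
    obtain ⟨U, rfl⟩ := exists_fin_map_univ_eq B hB
    exact ⟨U, V, (isometrySolution_iff U V).mpr hAB, fun h => hne ((tuplesEquiv_iff U V).mp h)⟩

/-- There exists a nontrivial solution of the isometry equation with tuples of length `m`
if and only if `m ≥ |K| + 1`. -/
theorem exists_nontrivial_solution_iff
    (K W : Type*) [Field K] [Fintype K] [AddCommGroup W] [Module K W]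
    [FiniteDimensional K W] (hdim : 1 < Module.finrank K W)
    (m : ℕ) (hm : 0 < m) :
    (∃ U V : Fin m → Submodule K W, IsometrySolution U V ∧ ¬ TuplesEquiv U V) ↔
      m ≥ Fintype.card K + 1 :=
  exists_nontrivial_solution_iff_general K W hdim m
end

section
/- Let K be a finite field with |K| = q, let W be a finite-dimensional K-vector space, and let (U,V) be a nontrivial solution of the isometry equation with tuples of length m = q+1 satisfying max_{1≤i≤q+1} dim_K V_i > max_{1≤i≤q+1} dim_K U_i. Then the pair (U,V) is equivalent to a pair of Type A: there exist a subspace S ⊆ W and linearly independent vectors a, b ∈ W with S ∩ span{a,b} = {0}, and permutations of the two tuples, after which V_1 = ⋯ = V_q = S + span{a,b}, V_{q+1} = S, and U_1, …, U_{q+1} are the q+1 subspaces S + span{α a + β b} as [α : β] ranges over the points of the projective line over K. -/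
open Finset
open scoped Classical

section AuxLemmasForTypeA

variable {K W : Type*} [Field K] [Fintype K] [AddCommGroup W] [Module K W]
    [FiniteDimensional K W]

/-- A union of at most `card K` proper subspaces of `P` cannot cover `P`. -/
lemma no_cover' {ι : Type*} (P : Submodule K W) (A : ι → Submodule K W) (F : Finset ι)
    (hF : F.card ≤ Fintype.card K) (hlt : ∀ j ∈ F, A j < P) :
    ∃ x ∈ P, ∀ j ∈ F, x ∉ A j := by
  classical
  haveI : Finite W := Module.finite_of_finite K
  haveI : Fintype W := Fintype.ofFinite W
  rcases F.eq_empty_or_nonempty with rfl | ⟨j0, hj0⟩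
  · exact ⟨0, P.zero_mem, by simp⟩
  by_contra h
  push_neg at h
  set q := Fintype.card K with hq
  have hq1 : 1 < q := Fintype.one_lt_card
  have hPne : Nontrivial P := Submodule.nontrivial_iff_ne_bot.2 fun h =>
    absurd (h ▸ hlt j0 hj0) (by simp)
  have hD : 1 ≤ Module.finrank K P := Module.finrank_pos
  set D := Module.finrank K P with hDdef
  -- cardinalities
  have cardP : (Set.toFinset (P : Set W)).card = q ^ D := by
    rw [Set.toFinset_card]
    exact Module.card_eq_pow_finrank
  have cardA : ∀ j ∈ F, (Set.toFinset ((A j : Set W))).card ≤ q ^ (D - 1) := by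
    intro j hj
    rw [Set.toFinset_card]
    have : Module.finrank K (A j) ≤ D - 1 := by
      have := Submodule.finrank_lt_finrank_of_lt (hlt j hj)
      omega
    calc Fintype.card (A j) = q ^ Module.finrank K (A j) := Module.card_eq_pow_finrank
      _ ≤ q ^ (D - 1) := Nat.pow_le_pow_right (by omega) this
  -- the covering inclusion on nonzero vectors
  have hsub : (Set.toFinset (P : Set W)).erase 0 ⊆
      F.biUnion fun j => (Set.toFinset ((A j : Set W))).erase 0 := by
    intro x hx
    rw [mem_erase, Set.mem_toFinset] at hx
    obtain ⟨j, hj, hxj⟩ := h x hx.2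
    exact mem_biUnion.2 ⟨j, hj, by rw [mem_erase, Set.mem_toFinset]; exact ⟨hx.1, hxj⟩⟩
  have hcard := card_le_card hsub
  have h1 : ((Set.toFinset (P : Set W)).erase 0).card = q ^ D - 1 := by
    rw [card_erase_of_mem (by rw [Set.mem_toFinset]; exact P.zero_mem), cardP]
  have h2 : (F.biUnion fun j => (Set.toFinset ((A j : Set W))).erase 0).card
      ≤ q * (q ^ (D - 1) - 1) := by
    refine (card_biUnion_le).trans ?_
    calc ∑ j ∈ F, ((Set.toFinset ((A j : Set W))).erase 0).card
        ≤ ∑ _j ∈ F, (q ^ (D - 1) - 1) := by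
          refine sum_le_sum fun j hj => ?_
          rw [card_erase_of_mem (by rw [Set.mem_toFinset]; exact (A j).zero_mem)]
          exact Nat.sub_le_sub_right (cardA j hj) 1
      _ = F.card * (q ^ (D - 1) - 1) := by rw [sum_const, smul_eq_mul]
      _ ≤ q * (q ^ (D - 1) - 1) := Nat.mul_le_mul_right _ hF
  set N := q ^ (D - 1) with hN
  have hN1 : 1 ≤ N := Nat.one_le_pow _ _ (by omega)
  have hpow : q ^ D = q * N := by
    conv_lhs => rw [show D = 1 + (D - 1) by omega, pow_add, pow_one]
  have hmul : q * (N - 1) = q * N - q := by rw [Nat.mul_sub, mul_one]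
  have hqN : q ≤ q * N := Nat.le_mul_of_pos_right q (by omega)
  rw [h1, hpow] at hcard
  omega

lemma covering_structure (P : Submodule K W) (A : Fin (Fintype.card K + 1) → Submodule K W)
    (hlt : ∀ j, A j < P) (hcov : ∀ w ∈ P, ∃ j, w ∈ A j) :
    (∀ j, ∃ x ∈ A j, ∀ k, k ≠ j → x ∉ A k) ∧
    (∀ j, ∀ x ∈ P, x ∉ A j → A j ⊔ Submodule.span K {x} = P) ∧
    (∀ j k j' k', j ≠ k → j' ≠ k' → A j ⊓ A k = A j' ⊓ A k') := by
  classical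
  have hq1 : 1 < Fintype.card K := Fintype.one_lt_card
  -- private points
  have priv : ∀ j, ∃ x ∈ A j, ∀ k, k ≠ j → x ∉ A k := by
    intro j
    obtain ⟨x, hxP, hx⟩ := no_cover' P A (univ.erase j)
      (by rw [card_erase_of_mem (mem_univ j), card_univ, Fintype.card_fin]; omega)
      (fun k _ => hlt k)
    obtain ⟨l, hl⟩ := hcov x hxP
    have hlj : l = j := by
      by_contra hne
      exact hx l (mem_erase.2 ⟨hne, mem_univ l⟩) hl
    exact ⟨x, hlj ▸ hl, fun k hk => hx k (mem_erase.2 ⟨hk, mem_univ k⟩)⟩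
  choose xp hxpA hxppriv using priv
  have hxpP : ∀ j, xp j ∈ P := fun j => (hlt j).le (hxpA j)
  -- hyperplane property w.r.t. private points
  have hyper0 : ∀ j k, k ≠ j → A k ⊔ Submodule.span K {xp j} = P := by
    intro j k hkj
    have key : ∀ y ∈ P, y ∉ A j → y ∈ A k ⊔ Submodule.span K {xp j} := by
      intro y hyP hyA
      have hex : ∀ t : K, ∃ l, l ≠ j ∧ y + t • xp j ∈ A l := by
        intro t
        obtain ⟨l, hl⟩ := hcov (y + t • xp j) (P.add_mem hyP (P.smul_mem t (hxpP j)))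
        refine ⟨l, ?_, hl⟩
        rintro rfl
        exact hyA (by simpa using (A l).sub_mem hl ((A l).smul_mem t (hxpA l)))
      choose ψ hψj hψmem using hex
      have hinj : Function.Injective ψ := by
        intro t t' htt'
        by_contra hne
        have h1 : (t - t') • xp j ∈ A (ψ t) := by
          have := (A (ψ t)).sub_mem (hψmem t) (htt' ▸ hψmem t')
          simpa [add_sub_add_left_eq_sub, ← sub_smul] using this
        have : xp j ∈ A (ψ t) := by
          have := (A (ψ t)).smul_mem (t - t')⁻¹ h1
          rwa [smul_smul, inv_mul_cancel₀ (sub_ne_zero.2 hne), one_smul] at this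
        exact hxppriv j (ψ t) (hψj t) this
      -- image of ψ is all of univ.erase j
      have himg : univ.image ψ = univ.erase j := by
        apply eq_of_subset_of_card_le
        · intro l hl
          obtain ⟨t, _, rfl⟩ := mem_image.1 hl
          exact mem_erase.2 ⟨hψj t, mem_univ _⟩
        · rw [card_erase_of_mem (mem_univ j), card_image_of_injective _ hinj]
          simp
      have hkimg : k ∈ univ.image ψ := himg ▸ mem_erase.2 ⟨hkj, mem_univ k⟩
      obtain ⟨t, _, ht⟩ := mem_image.1 hkimg
      have : y + t • xp j ∈ A k := ht ▸ hψmem t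
      have : y = (y + t • xp j) + (-t) • xp j := by simp [add_assoc, ← add_smul]
      rw [this]
      exact Submodule.add_mem _ (Submodule.mem_sup_left ‹y + t • xp j ∈ A k›)
        (Submodule.mem_sup_right (Submodule.smul_mem _ _ (Submodule.mem_span_singleton_self _)))
    apply le_antisymm
    · exact sup_le (hlt k).le ((Submodule.span_singleton_le_iff_mem _ _).2 (hxpP j))
    · intro z hzP
      obtain ⟨y0, hy0P, hy0A⟩ := SetLike.exists_of_lt (hlt j)
      by_cases hz : z ∈ A j
      · have h1 : z + y0 ∉ A j := fun h => hy0A (by simpa using (A j).sub_mem h hz)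
        have h2 : z + y0 ∈ A k ⊔ Submodule.span K {xp j} :=
          key _ (P.add_mem hzP hy0P) h1
        have h3 : y0 ∈ A k ⊔ Submodule.span K {xp j} := key _ hy0P hy0A
        simpa using Submodule.sub_mem _ h2 h3
      · exact key z hzP hz
  -- general hyperplane property
  have hyper : ∀ k, ∀ x ∈ P, x ∉ A k → A k ⊔ Submodule.span K {x} = P := by
    intro k x hxP hxA
    have hex : ∃ j, j ≠ k := by
      refine ⟨if k = 0 then 1 else 0, ?_⟩
      split <;> simp_all <;> omega
    obtain ⟨j, hjk⟩ := hex
    have hP := hyper0 j k (Ne.symm hjk)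
    have hx' : x ∈ A k ⊔ Submodule.span K {xp j} := hP.symm ▸ hxP
    obtain ⟨u, hu, v, hv, huv⟩ := Submodule.mem_sup.1 hx'
    obtain ⟨t, rfl⟩ := Submodule.mem_span_singleton.1 hv
    have ht : t ≠ 0 := by
      rintro rfl
      exact hxA (by rw [← huv]; simpa using hu)
    have hxpmem : xp j ∈ A k ⊔ Submodule.span K {x} := by
      have h1 : x - u ∈ A k ⊔ Submodule.span K {x} :=
        Submodule.sub_mem _ (Submodule.mem_sup_right (Submodule.mem_span_singleton_self x))
          (Submodule.mem_sup_left hu)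
      have h2 := Submodule.smul_mem _ t⁻¹ h1
      have h3 : x - u = t • xp j := by rw [← huv]; abel
      rwa [h3, smul_smul, inv_mul_cancel₀ ht, one_smul] at h2
    apply le_antisymm
    · exact sup_le (hlt k).le ((Submodule.span_singleton_le_iff_mem _ _).2 hxP)
    · rw [← hP]
      exact sup_le le_sup_left ((Submodule.span_singleton_le_iff_mem _ _).2 hxpmem)
  -- pairwise intersections coincide
  have inter3 : ∀ j k l, j ≠ k → l ≠ j → l ≠ k → A j ⊓ A k ≤ A l := by
    intro j k l hjk hlj hlk s hs
    obtain ⟨hsj, hsk⟩ := Submodule.mem_inf.1 hs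
    by_contra hsl
    have hsP : s ∈ P := (hlt j).le hsj
    have H : ∀ t : K, ∃ m, t ≠ 0 → (m ≠ j ∧ m ≠ k ∧ m ≠ l) ∧ s + t • xp l ∈ A m := by
      intro t
      by_cases ht : t = 0
      · exact ⟨j, fun h => absurd ht h⟩
      · obtain ⟨m, hm⟩ := hcov (s + t • xp l) (P.add_mem hsP (P.smul_mem t (hxpP l)))
        have hxpm : ∀ m', s + t • xp l ∈ A m' → xp l ∈ A m' ∨ m' = l → m' ≠ l → xp l ∈ A m' := by
          intro m' h1 h2 h3; tauto
        refine ⟨m, fun _ => ⟨⟨?_, ?_, ?_⟩, hm⟩⟩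
        · rintro rfl
          have : t • xp l ∈ A m := by simpa using (A m).sub_mem hm hsj
          have : xp l ∈ A m := by
            have := (A m).smul_mem t⁻¹ this
            rwa [smul_smul, inv_mul_cancel₀ ht, one_smul] at this
          exact hxppriv l m (Ne.symm hlj) this
        · rintro rfl
          have : t • xp l ∈ A m := by simpa using (A m).sub_mem hm hsk
          have : xp l ∈ A m := by
            have := (A m).smul_mem t⁻¹ this
            rwa [smul_smul, inv_mul_cancel₀ ht, one_smul] at this
          exact hxppriv l m (Ne.symm hlk) this
        · rintro rfl
          exact hsl (by simpa using (A m).sub_mem hm ((A m).smul_mem t (hxpA m)))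
    choose φ hφ using H
    have hc : (((univ.erase j).erase k).erase l).card < ((univ : Finset K).erase 0).card := by
      rw [card_erase_of_mem (mem_erase.2 ⟨hlk, mem_erase.2 ⟨hlj, mem_univ l⟩⟩),
        card_erase_of_mem (mem_erase.2 ⟨Ne.symm hjk, mem_univ k⟩),
        card_erase_of_mem (mem_univ j), card_erase_of_mem (mem_univ (0 : K))]
      simp only [card_univ, Fintype.card_fin]
      omega
    have hmaps : ∀ t ∈ (univ : Finset K).erase 0, φ t ∈ ((univ.erase j).erase k).erase l := by
      intro t ht
      obtain ⟨⟨h1, h2, h3⟩, _⟩ := hφ t (mem_erase.1 ht).1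
      exact mem_erase.2 ⟨h3, mem_erase.2 ⟨h2, mem_erase.2 ⟨h1, mem_univ _⟩⟩⟩
    obtain ⟨t, ht, t', ht', htt', heq⟩ :=
      Finset.exists_ne_map_eq_of_card_lt_of_maps_to hc hmaps
    obtain ⟨⟨hm1, _, hm3⟩, hmem⟩ := hφ t (mem_erase.1 ht).1
    obtain ⟨_, hmem'⟩ := hφ t' (mem_erase.1 ht').1
    rw [← heq] at hmem'
    have h1 : (t - t') • xp l ∈ A (φ t) := by
      have := (A (φ t)).sub_mem hmem hmem'
      simpa [add_sub_add_left_eq_sub, ← sub_smul] using this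
    have h2 : xp l ∈ A (φ t) := by
      have := (A (φ t)).smul_mem (t - t')⁻¹ h1
      rwa [smul_smul, inv_mul_cancel₀ (sub_ne_zero.2 htt'), one_smul] at this
    exact hxppriv l (φ t) hm3 h2
  have hle : ∀ j k l, j ≠ k → A j ⊓ A k ≤ A l := by
    intro j k l hjk
    by_cases hlj : l = j
    · subst hlj; exact inf_le_left
    by_cases hlk : l = k
    · subst hlk; exact inf_le_right
    exact inter3 j k l hjk hlj hlk
  refine ⟨fun j => ⟨xp j, hxpA j, hxppriv j⟩, hyper, fun j k j' k' h1 h2 => ?_⟩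
  exact le_antisymm (le_inf (hle _ _ _ h1) (hle _ _ _ h1))
    (le_inf (hle _ _ _ h2) (hle _ _ _ h2))

lemma finrank_sup_span_singleton' (X : Submodule K W) {x : W} (hx : x ∉ X) :
    Module.finrank K ↥(X ⊔ Submodule.span K {x}) = Module.finrank K X + 1 := by
  have hx0 : x ≠ 0 := fun h => hx (h ▸ X.zero_mem)
  have hinf : X ⊓ Submodule.span K {x} = ⊥ := by
    rw [eq_bot_iff]
    rintro y hy
    obtain ⟨hyX, hys⟩ := Submodule.mem_inf.1 hy
    obtain ⟨t, rfl⟩ := Submodule.mem_span_singleton.1 hys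
    rcases eq_or_ne t 0 with rfl | ht
    · simp
    · exact absurd (by simpa [smul_smul, inv_mul_cancel₀ ht] using X.smul_mem t⁻¹ hyX) hx
  have h := Submodule.finrank_sup_add_finrank_inf_eq X (Submodule.span K {x})
  rw [hinf, finrank_span_singleton hx0] at h
  simpa using h

lemma nat_card_submodule (X : Submodule K W) :
    Nat.card ↥X = Fintype.card K ^ Module.finrank K X := by
  haveI : Finite W := Module.finite_of_finite K
  haveI : Fintype W := Fintype.ofFinite W
  haveI : Fintype ↥X := Fintype.ofFinite _
  rw [Nat.card_eq_fintype_card]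
  exact Module.card_eq_pow_finrank

end AuxLemmasForTypeA

/-- A nontrivial solution of length `q + 1` in which the maximal dimension on the `V` side
exceeds the maximal dimension on the `U` side is equivalent to a pair of Type A. -/
theorem nontrivial_solution_maxdim_lt_is_typeA
    (K W : Type*) [Field K] [Fintype K] [AddCommGroup W] [Module K W]
    [FiniteDimensional K W]
    (U V : Fin (Fintype.card K + 1) → Submodule K W)
    (hsol : IsometrySolution U V) (hnontriv : ¬ TuplesEquiv U V)
    (hdim : (Finset.univ.sup fun i => Module.finrank K ↥(V i)) >
      (Finset.univ.sup fun i => Module.finrank K ↥(U i))) :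
    ∃ (σ τ : Equiv.Perm (Fin (Fintype.card K + 1))) (S : Submodule K W) (a b : W),
      LinearIndependent K ![a, b] ∧
      S ⊓ Submodule.span K {a, b} = ⊥ ∧
      (∀ i, i ≠ Fin.last (Fintype.card K) → V (σ i) = S ⊔ Submodule.span K {a, b}) ∧
      V (σ (Fin.last (Fintype.card K))) = S ∧
      ∃ α β : Fin (Fintype.card K + 1) → K,
        (∀ i, (α i, β i) ≠ 0) ∧
        (∀ i j, i ≠ j → α i * β j ≠ α j * β i) ∧
        (∀ i, U (τ i) = S ⊔ Submodule.span K {α i • a + β i • b}) := by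
  classical
  clear hnontriv
  haveI : Finite W := Module.finite_of_finite K
  have hq1 : 1 < Fintype.card K := Fintype.one_lt_card
  have h01 : (0 : Fin (Fintype.card K + 1)) ≠ 1 := by
    have hv : (1 : Fin (Fintype.card K + 1)).val = 1 := by
      rw [Fin.val_one']
      exact Nat.mod_eq_of_lt (by omega)
    intro h
    have := congrArg Fin.val h
    rw [hv, Fin.val_zero] at this
    exact zero_ne_one this
  have hpick : ∀ j : Fin (Fintype.card K + 1), ∃ k, k ≠ j := by
    intro j
    by_cases h : j = 0
    · exact ⟨1, by rw [h]; exact h01.symm⟩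
    · exact ⟨0, Ne.symm h⟩
  have hpos : ∀ X : Submodule K W, (0:ℝ) < ((Nat.card ↥X : ℝ))⁻¹ := by
    intro X
    have : 0 < Nat.card ↥X := Nat.card_pos
    positivity
  have htnn : ∀ (X : Submodule K W) (w : W),
      (0:ℝ) ≤ ((Nat.card ↥X : ℝ))⁻¹ * (if w ∈ X then 1 else 0) := by
    intro X w
    by_cases h : w ∈ X <;> simp [h, le_of_lt (hpos X)]
  obtain ⟨i0, -, hi0⟩ := Finset.exists_mem_eq_sup (univ : Finset (Fin (Fintype.card K + 1)))
    ⟨0, mem_univ 0⟩ (fun i => Module.finrank K ↥(V i))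
  set P := V i0 with hPdef
  have hUlt : ∀ j, Module.finrank K ↥(U j) < Module.finrank K ↥P := by
    intro j
    have h1 : Module.finrank K ↥(U j) ≤ univ.sup (fun i => Module.finrank K ↥(U i)) :=
      Finset.le_sup (f := fun i => Module.finrank K ↥(U i)) (mem_univ j)
    have h3 := hdim
    rw [hi0] at h3
    exact lt_of_le_of_lt h1 h3
  -- every point of a V-space is covered by the U side
  have hUcov : ∀ i, ∀ w ∈ V i, ∃ j, w ∈ U j := by
    intro i w hw
    have h := hsol w
    have hL : (0:ℝ) < ∑ i, ((Nat.card ↥(V i) : ℝ))⁻¹ * (if w ∈ V i then 1 else 0) := by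
      refine Finset.sum_pos' (fun j _ => htnn _ _) ⟨i, mem_univ i, ?_⟩
      rw [if_pos hw, mul_one]
      exact hpos _
    rw [h] at hL
    by_contra hno
    push_neg at hno
    rw [Finset.sum_eq_zero (fun j _ => by rw [if_neg (hno j), mul_zero])] at hL
    exact lt_irrefl _ hL
  set A := fun j => U j ⊓ P with hAdef
  have hAltP : ∀ j, A j < P := by
    intro j
    refine lt_of_le_of_ne inf_le_right (fun h => ?_)
    have hPU : P ≤ U j := h ▸ inf_le_left
    exact absurd (Submodule.finrank_mono hPU) (not_le.2 (hUlt j))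
  have hcovP : ∀ w ∈ P, ∃ j, w ∈ A j := by
    intro w hw
    obtain ⟨j, hj⟩ := hUcov i0 w hw
    exact ⟨j, Submodule.mem_inf.2 ⟨hj, hw⟩⟩
  obtain ⟨priv, hyper, hinter⟩ := covering_structure P A hAltP hcovP
  choose z hzA hzpriv using priv
  set S := A 0 ⊓ A 1 with hSdef
  have hSeq : ∀ j k, j ≠ k → S = A j ⊓ A k := fun j k hjk => hinter 0 1 j k h01 hjk
  have hSle : ∀ j, S ≤ A j := by
    intro j
    obtain ⟨k, hk⟩ := hpick j
    rw [hSeq j k (Ne.symm hk)]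
    exact inf_le_left
  have hSP : S < P := lt_of_le_of_lt (hSle 0) (hAltP 0)
  have hzS : ∀ j, z j ∉ S := by
    intro j hzj
    obtain ⟨k, hk⟩ := hpick j
    exact hzpriv j k hk (hSle k hzj)
  have hzP : ∀ j, z j ∈ P := fun j => (hAltP j).le (hzA j)
  have hANe : ∀ j k, j ≠ k → A j ≠ A k := by
    intro j k hjk h
    exact hzpriv j k (Ne.symm hjk) (h ▸ hzA j)
  have lemA : ∀ j, ∀ x, x ∈ A j → x ∉ S → A j = S ⊔ Submodule.span K {x} := by
    intro j x hxA hxS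
    obtain ⟨k, hk⟩ := hpick j
    have hSjk : S = A j ⊓ A k := hSeq j k (Ne.symm hk)
    have hxk : x ∉ A k := fun h => hxS (hSjk ▸ Submodule.mem_inf.2 ⟨hxA, h⟩)
    have hxP : x ∈ P := (hAltP j).le hxA
    have hPk := hyper k x hxP hxk
    apply le_antisymm
    · intro y hy
      have hyP : y ∈ P := (hAltP j).le hy
      rw [← hPk] at hyP
      obtain ⟨u, hu, v, hv, huv⟩ := Submodule.mem_sup.1 hyP
      obtain ⟨t, rfl⟩ := Submodule.mem_span_singleton.1 hv
      have huj : u ∈ A j := by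
        have : y - t • x ∈ A j := (A j).sub_mem hy ((A j).smul_mem t hxA)
        have hu' : u = y - t • x := by rw [← huv]; abel
        rwa [hu']
      have huS : u ∈ S := hSjk ▸ Submodule.mem_inf.2 ⟨huj, hu⟩
      rw [← huv]
      exact Submodule.add_mem _ (Submodule.mem_sup_left huS)
        (Submodule.mem_sup_right (Submodule.smul_mem _ t (Submodule.mem_span_singleton_self x)))
    · exact sup_le (hSle j) ((Submodule.span_singleton_le_iff_mem _ _).2 hxA)
  set a := z 0 with hadef
  set b := z 1 with hbdef
  have hb0 : b ∉ A 0 := hzpriv 1 0 h01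
  have ha1 : a ∉ A 1 := hzpriv 0 1 (Ne.symm h01)
  have haS : a ∉ S := hzS 0
  have hbS : b ∉ S := hzS 1
  have haP : a ∈ P := hzP 0
  have hbP : b ∈ P := hzP 1
  have ha0 : a ≠ 0 := fun h => haS (h ▸ S.zero_mem)
  have hli : LinearIndependent K ![a, b] := by
    rw [LinearIndependent.pair_iff]
    intro s t hst
    have ht : t = 0 := by
      by_contra ht
      have : b = (-(t⁻¹ * s)) • a := by
        have h1 : t • b = -(s • a) := by
          rw [eq_neg_iff_add_eq_zero, add_comm]; exact hst
        have := congrArg (fun y => t⁻¹ • y) h1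
        simpa [smul_smul, inv_mul_cancel₀ ht, neg_smul, smul_neg] using this
      exact hb0 (this ▸ (A 0).smul_mem _ (hzA 0))
    have hs : s = 0 := by
      rw [ht, zero_smul, add_zero, smul_eq_zero] at hst
      tauto
    exact ⟨hs, ht⟩
  have hSab : S ⊓ Submodule.span K {a, b} = ⊥ := by
    rw [eq_bot_iff]
    rintro w hw
    obtain ⟨hwS, hwab⟩ := Submodule.mem_inf.1 hw
    obtain ⟨c, d, hcd⟩ := Submodule.mem_span_pair.1 hwab
    have hd : d = 0 := by
      by_contra hd
      have : b = d⁻¹ • (w - c • a) := by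
        rw [← hcd]; rw [add_sub_cancel_left, smul_smul, inv_mul_cancel₀ hd, one_smul]
      exact hb0 (this ▸ (A 0).smul_mem _ ((A 0).sub_mem (hSle 0 hwS) ((A 0).smul_mem c (hzA 0))))
    have hc : c = 0 := by
      by_contra hc
      rw [hd, zero_smul, add_zero] at hcd
      have : a = c⁻¹ • w := by rw [← hcd, smul_smul, inv_mul_cancel₀ hc, one_smul]
      exact ha1 (this ▸ (A 1).smul_mem _ (hSle 1 hwS))
    rw [hd, hc, zero_smul, zero_smul, add_zero] at hcd
    simpa [← hcd] using Submodule.zero_mem ⊥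
  have hspanab : Submodule.span K {a, b} = Submodule.span K {a} ⊔ Submodule.span K {b} := by
    rw [show ({a, b} : Set W) = insert a {b} from rfl, Submodule.span_insert]
  have hPab : P = S ⊔ Submodule.span K {a, b} := by
    have h1 : A 1 = S ⊔ Submodule.span K {b} := lemA 1 b (hzA 1) hbS
    have h2 : A 1 ⊔ Submodule.span K {a} = P := hyper 1 a haP ha1
    rw [← h2, h1, hspanab, sup_assoc, sup_comm (Submodule.span K {b}) (Submodule.span K {a})]
  have hbSa : b ∉ S ⊔ Submodule.span K {a} := by
    intro h
    obtain ⟨u, hu, v, hv, huv⟩ := Submodule.mem_sup.1 h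
    obtain ⟨t, rfl⟩ := Submodule.mem_span_singleton.1 hv
    have h1 : b - t • a ∈ S := by
      have : u = b - t • a := by rw [← huv]; abel
      exact this ▸ hu
    have h2 : b - t • a ∈ Submodule.span K {a, b} := by
      refine Submodule.sub_mem _ ?_ (Submodule.smul_mem _ _ ?_) <;>
        apply Submodule.subset_span <;> simp
    have h3 : b - t • a = 0 := by
      have := hSab ▸ Submodule.mem_inf.2 ⟨h1, h2⟩
      simpa using this
    rw [sub_eq_zero] at h3
    have h4 : t • a + (-1 : K) • b = 0 := by
      rw [neg_one_smul, ← h3]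
      abel
    have h5 := (LinearIndependent.pair_iff.1 hli t (-1) h4).2
    norm_num at h5

  -- the subspaces `U j` coincide with the hyperplanes `A j`
  have hAj : ∀ j, A j = S ⊔ Submodule.span K {z j} := fun j => lemA j (z j) (hzA j) (hzS j)
  have hfA : ∀ j, Module.finrank K ↥(A j) = Module.finrank K ↥S + 1 := by
    intro j
    rw [hAj j]
    exact finrank_sup_span_singleton' S (hzS j)
  have hfP : Module.finrank K ↥P = Module.finrank K ↥S + 2 := by
    rw [hPab, hspanab, ← sup_assoc, finrank_sup_span_singleton' _ hbSa,
      finrank_sup_span_singleton' S haS]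
  have hUA : ∀ j, U j = A j := by
    intro j
    rcases eq_or_lt_of_le (inf_le_left : A j ≤ U j) with h | h
    · exact h.symm
    · exfalso
      have h1 := Submodule.finrank_lt_finrank_of_lt h
      have h2 := hUlt j
      rw [hfP] at h2
      rw [hfA j] at h1
      omega
  -- cardinalities
  set Q := ((Fintype.card K : ℕ) : ℝ) with hQdef
  set cc := ((Nat.card ↥S : ℕ) : ℝ) with hccdef
  have hQ0 : (0:ℝ) < Q := by
    rw [hQdef]; exact_mod_cast lt_trans zero_lt_one hq1
  have hcc0 : (0:ℝ) < cc := by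
    rw [hccdef]; exact_mod_cast (Nat.card_pos : 0 < Nat.card ↥S)
  have hcA : ∀ j, ((Nat.card ↥(A j) : ℕ) : ℝ) = Q * cc := by
    intro j
    rw [hQdef, hccdef, nat_card_submodule (A j), nat_card_submodule S, hfA j]
    push_cast [pow_succ]
    ring
  have hcP : ((Nat.card ↥P : ℕ) : ℝ) = Q * (Q * cc) := by
    rw [hQdef, hccdef, nat_card_submodule P, nat_card_submodule S, hfP]
    push_cast [pow_succ]
    ring
  -- unique covering index off S
  have huniq : ∀ w, w ∈ P → w ∉ S → ∃ j, w ∈ A j ∧ ∀ k, w ∈ A k → k = j := by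
    intro w hw hwS
    obtain ⟨j, hj⟩ := hcovP w hw
    refine ⟨j, hj, fun k hk => ?_⟩
    by_contra hkj
    exact hwS ((hSeq k j hkj) ▸ Submodule.mem_inf.2 ⟨hk, hj⟩)
  -- RHS values
  have hRH : ∀ w : W, (∑ j, ((Nat.card ↥(U j) : ℝ))⁻¹ * (if w ∈ U j then 1 else 0)) =
      ∑ j, (Q * cc)⁻¹ * (if w ∈ A j then 1 else 0) := by
    intro w
    refine Finset.sum_congr rfl fun j _ => ?_
    rw [hUA j, hcA j]
  have hRS : ∀ w ∈ S, (∑ j, ((Nat.card ↥(U j) : ℝ))⁻¹ * (if w ∈ U j then 1 else 0)) =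
      (Q + 1) * (Q * cc)⁻¹ := by
    intro w hw
    rw [hRH, Finset.sum_congr rfl (fun j _ => by rw [if_pos (hSle j hw), mul_one]),
      Finset.sum_const, card_univ, Fintype.card_fin, nsmul_eq_mul]
    push_cast
    ring
  have hRP : ∀ w, w ∈ P → w ∉ S →
      (∑ j, ((Nat.card ↥(U j) : ℝ))⁻¹ * (if w ∈ U j then 1 else 0)) = (Q * cc)⁻¹ := by
    intro w hw hwS
    obtain ⟨j0, hj0, hj0u⟩ := huniq w hw hwS
    have hterm : ∀ j ∈ (univ : Finset (Fin (Fintype.card K + 1))),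
        (Q * cc)⁻¹ * (if w ∈ A j then 1 else 0) = if j = j0 then (Q * cc)⁻¹ else 0 := by
      intro j _
      by_cases h : j = j0
      · subst h
        rw [if_pos hj0, mul_one, if_pos rfl]
      · rw [if_neg (fun hm => h (hj0u j hm)), mul_zero, if_neg h]
    rw [hRH, Finset.sum_congr rfl hterm, Finset.sum_ite_eq' univ j0 (fun _ => (Q * cc)⁻¹),
      if_pos (mem_univ j0)]
  -- all V i inside P
  have hVP : ∀ i, V i ≤ P := by
    intro i w hw
    obtain ⟨j, hj⟩ := hUcov i w hw
    rw [hUA j] at hj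
    exact (hAltP j).le hj
  set T := univ.filter (fun i => V i = P) with hTdef
  have hi0T : i0 ∈ T := mem_filter.2 ⟨mem_univ _, rfl⟩
  -- T has exactly q elements
  have hTq : T.card = Fintype.card K := by
    by_cases hcase : ∃ w, w ∈ P ∧ w ∉ S ∧ ∀ i, i ∉ T → w ∉ V i
    · obtain ⟨w, hwP, hwS, hw⟩ := hcase
      have heq := hsol w
      rw [hRP w hwP hwS] at heq
      have hterm : ∀ i ∈ (univ : Finset (Fin (Fintype.card K + 1))),
          ((Nat.card ↥(V i) : ℝ))⁻¹ * (if w ∈ V i then 1 else 0) =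
          if i ∈ T then (Q * (Q * cc))⁻¹ else 0 := by
        intro i _
        by_cases h : i ∈ T
        · have hVi : V i = P := (mem_filter.1 h).2
          rw [if_pos h]
          rw [show V i = P from hVi, hcP, if_pos hwP, mul_one]
        · rw [if_neg h, if_neg (hw i h), mul_zero]
      rw [Finset.sum_congr rfl hterm, Finset.sum_ite_mem, univ_inter, Finset.sum_const,
        nsmul_eq_mul] at heq
      -- T.card * (Q*(Q*cc))⁻¹ = (Q*cc)⁻¹  ⇒  T.card = Q
      have hne1 : Q * cc ≠ 0 := by positivity
      have hne2 : Q * (Q * cc) ≠ 0 := by positivity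
      have hcast : (T.card : ℝ) = Q := by
        field_simp at heq
        nlinarith [heq, hQ0, hcc0]
      rw [hQdef] at hcast
      exact_mod_cast hcast
    · exfalso
      push_neg at hcase
      set C := fun i => if i ∈ T then S else V i with hCdef
      have hClt : ∀ i, C i < P := by
        intro i
        simp only [hCdef]
        split
        · exact hSP
        · next h => exact lt_of_le_of_ne (hVP i) (fun hh => h (mem_filter.2 ⟨mem_univ _, hh⟩))
      by_cases hT2 : 2 ≤ T.card
      · have hcard : ((univ \ T) ∪ {i0}).card ≤ Fintype.card K := by
          refine le_trans (card_union_le _ _) ?_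
          rw [card_sdiff_of_subset (subset_univ T), card_univ, Fintype.card_fin, card_singleton]
          omega
        obtain ⟨x, hxP, hx⟩ := no_cover' P C ((univ \ T) ∪ {i0}) hcard (fun j _ => hClt j)
        have hxS : x ∉ S := by
          have h1 := hx i0 (mem_union_right _ (mem_singleton_self i0))
          simp only [hCdef, if_pos hi0T] at h1
          exact h1
        obtain ⟨i, hiT, hiV⟩ := hcase x hxP hxS
        have h2 := hx i (mem_union_left _ (mem_sdiff.2 ⟨mem_univ i, hiT⟩))
        simp only [hCdef, if_neg hiT] at h2
        exact h2 hiV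
      · have hcov2 : ∀ w ∈ P, ∃ i, w ∈ C i := by
          intro w hw
          by_cases hwS : w ∈ S
          · exact ⟨i0, by simp only [hCdef, if_pos hi0T]; exact hwS⟩
          · obtain ⟨i, hiT, hiV⟩ := hcase w hw hwS
            exact ⟨i, by simp only [hCdef, if_neg hiT]; exact hiV⟩
        obtain ⟨-, hyp2, -⟩ := covering_structure P C hClt hcov2
        have hyp3 := hyp2 i0 a haP (by simp only [hCdef, if_pos hi0T]; exact haS)
        simp only [hCdef, if_pos hi0T] at hyp3
        exact hbSa (hyp3.symm ▸ hbP)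
  -- the exceptional index i1
  have hTc : (univ \ T).card = 1 := by
    rw [card_sdiff_of_subset (subset_univ T), card_univ, Fintype.card_fin, hTq]
    omega
  obtain ⟨i1, hi1⟩ := card_eq_one.1 hTc
  have hi1T : i1 ∉ T := (mem_sdiff.1 (by rw [hi1]; exact mem_singleton_self i1)).2
  have hTmem : ∀ i, i ≠ i1 → V i = P := by
    intro i hi
    by_contra h
    have hiT : i ∉ T := fun hh => h (mem_filter.1 hh).2
    have h2 : i ∈ univ \ T := mem_sdiff.2 ⟨mem_univ i, hiT⟩
    rw [hi1] at h2
    exact hi (mem_singleton.1 h2)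
  have hTuniv : univ.erase i1 = T := by
    rw [Finset.erase_eq]
    ext i
    simp only [mem_sdiff, mem_univ, true_and, mem_singleton]
    constructor
    · intro h
      exact mem_filter.2 ⟨mem_univ _, hTmem i h⟩
    · intro h hcon
      exact hi1T (hcon ▸ h)
  -- LHS values
  have hLs : ∀ w, w ∈ P → (∑ i, ((Nat.card ↥(V i) : ℝ))⁻¹ * (if w ∈ V i then 1 else 0)) =
      Q * (Q * (Q * cc))⁻¹ + ((Nat.card ↥(V i1) : ℝ))⁻¹ * (if w ∈ V i1 then 1 else 0) := by
    intro w hw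
    rw [← Finset.sum_erase_add _ _ (mem_univ i1), hTuniv]
    congr 1
    have hterm : ∀ i ∈ T, ((Nat.card ↥(V i) : ℝ))⁻¹ * (if w ∈ V i then 1 else 0) =
        (Q * (Q * cc))⁻¹ := by
      intro i hi
      rw [show V i = P from (mem_filter.1 hi).2, hcP, if_pos hw, mul_one]
    rw [Finset.sum_congr rfl hterm, Finset.sum_const, nsmul_eq_mul, hTq]
  have hinv : Q * (Q * (Q * cc))⁻¹ = (Q * cc)⁻¹ := by
    field_simp
  -- the exceptional space is S
  have hXS : V i1 = S := by
    apply le_antisymm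
    · intro x hx
      by_contra hxS
      have hxP : x ∈ P := hVP i1 hx
      have heq := hsol x
      rw [hRP x hxP hxS, hLs x hxP, if_pos hx, mul_one, hinv] at heq
      have := hpos (V i1)
      linarith
    · intro s hs
      have hsP : s ∈ P := hSP.le hs
      have heq := hsol s
      rw [hRS s hs, hLs s hsP, hinv] at heq
      by_cases h : s ∈ V i1
      · exact h
      · exfalso
        rw [if_neg h, mul_zero, add_zero] at heq
        have hx0 : (0:ℝ) < (Q * cc)⁻¹ := by positivity
        nlinarith
  -- conclusion
  refine ⟨Equiv.swap i1 (Fin.last _), 1, S, a, b, hli, hSab, ?_, ?_, ?_⟩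
  · intro i hi
    have hne : Equiv.swap i1 (Fin.last _) i ≠ i1 := by
      intro h
      have h2 : Equiv.swap i1 (Fin.last _) i = Equiv.swap i1 (Fin.last _) (Fin.last _) := by
        rw [Equiv.swap_apply_right]
        exact h
      exact hi ((Equiv.swap i1 (Fin.last _)).injective h2)
    rw [hTmem _ hne, hPab]
  · rw [Equiv.swap_apply_right]
    exact hXS
  · have hdec : ∀ j, ∃ c d : K, (c • a + d • b) ∈ A j ∧ (c • a + d • b) ∉ S := by
      intro j
      have hzmem : z j ∈ S ⊔ Submodule.span K {a, b} := hPab ▸ hzP j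
      obtain ⟨u, hu, v, hv, huv⟩ := Submodule.mem_sup.1 hzmem
      obtain ⟨c, d, hcd⟩ := Submodule.mem_span_pair.1 hv
      have hv' : v = z j - u := by rw [← huv]; abel
      refine ⟨c, d, ?_, ?_⟩
      · rw [hcd, hv']
        exact (A j).sub_mem (hzA j) (hSle j hu)
      · rw [hcd]
        intro hvS
        exact hzS j (by rw [← huv]; exact S.add_mem hu hvS)
    choose α β hmem hnS using hdec
    refine ⟨α, β, ?_, ?_, ?_⟩
    · intro i h
      have h1 : α i = 0 ∧ β i = 0 := by simpa [Prod.ext_iff] using h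
      apply hnS i
      rw [h1.1, h1.2]
      simp
    · intro i j hij hcon
      apply hANe i j hij
      have hAi := lemA i _ (hmem i) (hnS i)
      have hAj' := lemA j _ (hmem j) (hnS j)
      have hspan : Submodule.span K {α i • a + β i • b} =
          Submodule.span K {α j • a + β j • b} := by
        rcases eq_or_ne (α i) 0 with h0 | h0
        · have hbi : β i ≠ 0 := fun h => hnS i (by rw [h0, h]; simp)
          have haj : α j = 0 := by
            rw [h0, zero_mul] at hcon
            rcases mul_eq_zero.1 hcon.symm with h | h
            · exact h
            · exact absurd h hbi
          have hbj : β j ≠ 0 := fun h => hnS j (by rw [haj, h]; simp)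
          simp only [h0, haj, zero_smul, zero_add]
          have : β j • b = (β j * (β i)⁻¹) • (β i • b) := by
            rw [smul_smul]
            congr 1
            field_simp
          rw [this]
          exact (Submodule.span_singleton_smul_eq
            (isUnit_iff_ne_zero.2 (mul_ne_zero hbj (inv_ne_zero hbi))) _).symm
        · have haj : α j ≠ 0 := by
            intro h
            rw [h, zero_mul] at hcon
            rcases mul_eq_zero.1 hcon with h2 | h2
            · exact h0 h2
            · exact hnS j (by rw [h, h2]; simp)
          have hc1 : α j * (α i)⁻¹ * α i = α j := by field_simp
          have hc2 : α j * (α i)⁻¹ * β i = β j := by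
            field_simp
            linear_combination -hcon
          have hkey : α j • a + β j • b = (α j * (α i)⁻¹) • (α i • a + β i • b) := by
            rw [smul_add, smul_smul, smul_smul, hc1, hc2]
          rw [hkey]
          exact (Submodule.span_singleton_smul_eq
            (isUnit_iff_ne_zero.2 (mul_ne_zero haj (inv_ne_zero h0))) _).symm
      rw [hAi, hAj', hspan]
    · intro i
      show U ((1 : Equiv.Perm (Fin (Fintype.card K + 1))) i) = _
      simp only [Equiv.Perm.one_apply]
      rw [hUA i]
      exact lemA i _ (hmem i) (hnS i)
end

section
/- Let K be a finite field with |K| = q, let W be a finite-dimensional K-vector space, and let (U,V) be a nontrivial solution of the isometry equation with tuples of length m = q+1 such that max_i dim_K V_i = max_i dim_K U_i = n > 1. Then: (a) U_i ≠ V_j for all i, j ∈ {1,…,m}; and (b) for all i, j ∈ {1,…,m}, V_i ⊆ V_j implies i = j. -/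
open Finset
open scoped Classical

/-!
Call a subspace unbalanced if it occurs a different number of times in `V` and in `U`, and
`U`-heavy if it occurs more often in `U`. Evaluating the isometry equation at a point of an
inclusion-maximal unbalanced subspace `M` that is `V`-heavy shows that `M` is covered by the
`U`-heavy subspaces, none of which contains `M`. A space over a field with `q` elements is not the
union of `q` proper subspaces, so with only `q + 1` entries every `U i` must be `U`-heavy and own a
point of `M` outside all other `U j`: the `U i` are pairwise incomparable and do not occur in `V`.
The dimension hypothesis rules out that all maximal unbalanced subspaces are `V`-heavy, and the
argument applied to `(V, U)` gives the theorem.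
-/

namespace Submodule

variable {K V : Type*} [Field K] [Fintype K] [AddCommGroup V] [Module K V]

theorem card_mul_natCard_le_of_ne_top [Finite V] {X : Submodule K V} (hX : X ≠ ⊤) :
    Fintype.card K * Nat.card X ≤ Nat.card V := by
  have : FiniteDimensional K V := Module.Finite.of_finite
  rw [Module.natCard_eq_pow_finrank (K := K) (V := V),
    Module.natCard_eq_pow_finrank (K := K) (V := X), Nat.card_eq_fintype_card (α := K), ← pow_succ']
  exact Nat.pow_le_pow_right Fintype.card_pos (finrank_lt hX)

/-- Counting nonzero vectors improves the bound `#s < card K` of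
`Submodule.iUnion_ssubset_of_forall_ne_top_of_card_lt` by one; this is sharp, as the `q + 1` lines
of `𝔽_q²` cover it. -/
theorem exists_forall_notMem_of_card_le [Finite V] (s : Finset (Submodule K V))
    (hs : #s ≤ Fintype.card K) (hne : ∀ X ∈ s, X ≠ ⊤) : ∃ v : V, ∀ X ∈ s, v ∉ X := by
  by_contra! hcov
  have := Fintype.ofFinite V
  obtain ⟨X₀, hX₀, -⟩ := hcov 0
  let nonzero (X : Submodule K V) : Finset V := ({v | v ∈ X} : Finset V).erase 0
  have hcard_nonzero (X : Submodule K V) : #(nonzero X) = Nat.card X - 1 := by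
    rw [card_erase_of_mem (by simp [X.zero_mem]), Nat.card_eq_fintype_card, Fintype.card_subtype]
  have hsub : univ.erase 0 ⊆ s.biUnion nonzero := by
    intro v hv
    obtain ⟨X, hX, hvX⟩ := hcov v
    exact mem_biUnion.2 ⟨X, hX, by simpa [nonzero, hvX] using hv⟩
  have hbound (X) (hX : X ∈ s) : Fintype.card K * #(nonzero X) ≤ Nat.card V - Fintype.card K := by
    rw [hcard_nonzero, Nat.mul_sub_one]
    have := card_mul_natCard_le_of_ne_top (hne X hX)
    omega
  have hq : 2 ≤ Fintype.card K := Fintype.one_lt_card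
  have hqN : Fintype.card K ≤ Nat.card V := by
    have := card_mul_natCard_le_of_ne_top (hne X₀ hX₀)
    have : 0 < Nat.card X₀ := Nat.card_pos
    nlinarith
  have key : Fintype.card K * (Nat.card V - 1) ≤
      Fintype.card K * (Nat.card V - Fintype.card K) := calc
    _ = Fintype.card K * #(univ.erase (0 : V)) := by
      rw [card_erase_of_mem (mem_univ _), card_univ, ← Nat.card_eq_fintype_card (α := V)]
    _ ≤ Fintype.card K * ∑ X ∈ s, #(nonzero X) :=
      Nat.mul_le_mul_left _ ((card_le_card hsub).trans card_biUnion_le)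
    _ = ∑ X ∈ s, Fintype.card K * #(nonzero X) := mul_sum _ _ _
    _ ≤ #s * (Nat.card V - Fintype.card K) := by simpa using sum_le_card_nsmul s _ _ hbound
    _ ≤ _ := Nat.mul_le_mul_right _ hs
  have := Nat.le_of_mul_le_mul_left key (by omega)
  omega

theorem exists_mem_forall_notMem_of_card_le (M : Submodule K V) [Finite M]
    (s : Finset (Submodule K V)) (hs : #s ≤ Fintype.card K) (hM : ∀ X ∈ s, ¬ M ≤ X) :
    ∃ v ∈ M, ∀ X ∈ s, v ∉ X := by
  obtain ⟨v, hv⟩ := exists_forall_notMem_of_card_le (s.image (comap M.subtype))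
    (card_image_le.trans hs) (by simpa [comap_subtype_eq_top] using hM)
  exact ⟨v, v.2, fun X hX hvX => hv _ (mem_image_of_mem _ hX) hvX⟩

end Submodule

section TupleMult

variable {ι α : Type*} [Fintype ι]

noncomputable def tupleMult (T : ι → α) (x : α) : ℕ := #{i | T i = x}

theorem tupleMult_pos_iff {T : ι → α} {x : α} : 0 < tupleMult T x ↔ ∃ i, T i = x := by
  simp [tupleMult, card_pos, filter_nonempty_iff]

theorem tupleMult_apply_of_injective {T : ι → α} (hT : T.Injective) (i : ι) :
    tupleMult T (T i) = 1 :=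
  card_eq_one.2 ⟨i, by ext j; simp [hT.eq_iff]⟩

theorem exists_perm_of_tupleMult_eq {f g : ι → α} (h : ∀ x, tupleMult f x = tupleMult g x) :
    ∃ σ : Equiv.Perm ι, ∀ i, f i = g (σ i) := by
  let e (x : α) : {i // f i = x} ≃ {i // g i = x} :=
    Fintype.equivOfCardEq (by simpa [Fintype.card_subtype, tupleMult] using h x)
  exact ⟨Equiv.ofFiberEquiv e, fun i => (Equiv.ofFiberEquiv_map e i).symm⟩

theorem sum_comp_eq_sum_tupleMult_smul {M : Type*} [AddCommMonoid M] (T : ι → α) (f : α → M)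
    {A : Finset α} (hA : ∀ i, T i ∈ A) : ∑ i, f (T i) = ∑ x ∈ A, tupleMult T x • f x := by
  rw [sum_comp]
  refine sum_subset (by simpa [subset_iff] using hA) fun x _ hx => ?_
  simp_all

end TupleMult

namespace IsometrySolution

variable {K W : Type*} [Field K] [AddCommGroup W] [Module K W] {m : ℕ}
  {U V : Fin m → Submodule K W}

theorem symm (h : IsometrySolution U V) : IsometrySolution V U := fun w => (h w).symm

theorem sum_tupleMult_mul_eq (h : IsometrySolution U V) (w : W) {A : Finset (Submodule K W)}
    (hV : ∀ i, V i ∈ A) (hU : ∀ i, U i ∈ A) :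
    ∑ X ∈ A, (tupleMult V X : ℝ) * ((Nat.card X : ℝ)⁻¹ * if w ∈ X then 1 else 0) =
      ∑ X ∈ A, (tupleMult U X : ℝ) * ((Nat.card X : ℝ)⁻¹ * if w ∈ X then 1 else 0) := by
  have := h w
  rwa [sum_comp_eq_sum_tupleMult_smul V (fun X => (Nat.card X : ℝ)⁻¹ * if w ∈ X then 1 else 0) hV,
    sum_comp_eq_sum_tupleMult_smul U (fun X => (Nat.card X : ℝ)⁻¹ * if w ∈ X then 1 else 0) hU,
    sum_congr rfl fun _ _ => nsmul_eq_mul .., sum_congr rfl fun _ _ => nsmul_eq_mul ..] at this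

/-- Otherwise every term of the isometry equation at `w`, written over distinct subspaces, is at
least as large on the `V` side, and strictly larger at `M`. -/
theorem exists_lt_tupleMult_mem [Finite W] (h : IsometrySolution U V) {M : Submodule K W}
    (hM : tupleMult U M < tupleMult V M) {w : W} (hw : w ∈ M) :
    ∃ i, tupleMult V (U i) < tupleMult U (U i) ∧ w ∈ U i := by
  by_contra! hno
  have hMV : ∃ j, V j = M := tupleMult_pos_iff.1 (by omega)
  refine (sum_lt_sum (s := univ.image V ∪ univ.image U) (fun X _ => ?_) ⟨M, ?_, ?_⟩).ne'
    (h.sum_tupleMult_mul_eq w (by simp) (by simp))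
  · by_cases hwX : w ∈ X
    · have : tupleMult U X ≤ tupleMult V X := by
        by_contra! hlt
        obtain ⟨i, rfl⟩ := tupleMult_pos_iff.1 (by omega : 0 < tupleMult U X)
        exact hno i hlt hwX
      gcongr
    · simp [hwX]
  · simpa using Or.inl hMV
  · have : 0 < Nat.card M := Nat.card_pos
    rw [if_pos hw, mul_one]
    gcongr

variable [Fintype K] [Finite W]

/-- A point of `M` avoiding the at most `q` `U`-heavy `U j` with `j ≠ i` still lies in a `U`-heavy
`U k`, so `k = i`. -/
theorem lt_tupleMult_and_exists_mem_forall_notMem (h : IsometrySolution U V)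
    (hm : m ≤ Fintype.card K + 1) {M : Submodule K W}
    (hmax : Maximal (fun X => tupleMult V X ≠ tupleMult U X) M)
    (hM : tupleMult U M < tupleMult V M) (i : Fin m) :
    tupleMult V (U i) < tupleMult U (U i) ∧
      ∃ w ∈ U i, ∀ j ≠ i, tupleMult V (U j) < tupleMult U (U j) → w ∉ U j := by
  let heavy : Finset (Fin m) := {j | tupleMult V (U j) < tupleMult U (U j)}
  have not_le (j) (hj : j ∈ heavy) : ¬ M ≤ U j := fun hle => by
    have hj : tupleMult V (U j) < tupleMult U (U j) := by simpa [heavy] using hj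
    rw [le_antisymm (hmax.2 hj.ne hle) hle] at hj
    omega
  obtain ⟨w, hwM, hw⟩ := M.exists_mem_forall_notMem_of_card_le
    (((univ.erase i).filter (· ∈ heavy)).image U) (by
      calc _ ≤ #((univ.erase i).filter (· ∈ heavy)) := card_image_le
        _ ≤ #(univ.erase i) := card_filter_le _ _
        _ ≤ _ := by rw [card_erase_of_mem (mem_univ i), card_univ, Fintype.card_fin]; omega)
    (by simpa using fun X j _ hj hX => hX ▸ not_le j hj)
  obtain ⟨k, hk, hwk⟩ := h.exists_lt_tupleMult_mem hM hwM
  obtain rfl : k = i := by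
    by_contra hki
    exact hw _ (mem_image_of_mem U (by simp [heavy, hki, hk])) hwk
  exact ⟨hk, w, hwk, fun j hj hj' => hw _ (mem_image_of_mem U (by simp [heavy, hj, hj']))⟩

theorem eq_of_le_of_maximal (h : IsometrySolution U V) (hm : m ≤ Fintype.card K + 1)
    {M : Submodule K W} (hmax : Maximal (fun X => tupleMult V X ≠ tupleMult U X) M)
    (hM : tupleMult U M < tupleMult V M) {i j : Fin m} (hij : U i ≤ U j) : i = j := by
  by_contra hne
  obtain ⟨-, w, hwi, hw⟩ := h.lt_tupleMult_and_exists_mem_forall_notMem hm hmax hM i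
  exact hw j (Ne.symm hne) (h.lt_tupleMult_and_exists_mem_forall_notMem hm hmax hM j).1 (hij hwi)

theorem ne_of_maximal (h : IsometrySolution U V) (hm : m ≤ Fintype.card K + 1)
    {M : Submodule K W} (hmax : Maximal (fun X => tupleMult V X ≠ tupleMult U X) M)
    (hM : tupleMult U M < tupleMult V M) (i j : Fin m) : U i ≠ V j := by
  intro hij
  have hheavy := (h.lt_tupleMult_and_exists_mem_forall_notMem hm hmax hM i).1
  rw [tupleMult_apply_of_injective (fun _ _ hk => h.eq_of_le_of_maximal hm hmax hM hk.le)] at hheavy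
  have : 0 < tupleMult V (U i) := tupleMult_pos_iff.2 ⟨j, hij.symm⟩
  omega

/-- Otherwise every maximal unbalanced subspace is `V`-heavy, so no `U j` occurs in `V`; a maximal
unbalanced subspace above a `U i` of largest dimension is then some `V j`, hence equal to `U i`. -/
theorem exists_maximal_lt_tupleMult (h : IsometrySolution U V) (hm : m ≤ Fintype.card K + 1)
    (hnontriv : ¬ TuplesEquiv U V) {i : Fin m}
    (hi : ∀ j, Module.finrank K (V j) ≤ Module.finrank K (U i)) :
    ∃ M, Maximal (fun X => tupleMult V X ≠ tupleMult U X) M ∧ tupleMult V M < tupleMult U M := by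
  let unbalanced : Set (Submodule K W) := {X | tupleMult V X ≠ tupleMult U X}
  by_contra! hVheavy
  obtain ⟨X, hX⟩ : ∃ X, tupleMult V X ≠ tupleMult U X := by
    by_contra! hbal
    exact hnontriv (exists_perm_of_tupleMult_eq hbal)
  obtain ⟨M₀, hM₀⟩ := unbalanced.toFinite.exists_maximal ⟨X, hX⟩
  have hUV := h.ne_of_maximal hm hM₀ ((hVheavy M₀ hM₀).lt_of_ne hM₀.1.symm)
  have hUi : U i ∈ unbalanced := by
    have : ¬ 0 < tupleMult V (U i) := fun hpos =>
      let ⟨j, hj⟩ := tupleMult_pos_iff.1 hpos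
      hUV i j hj.symm
    have : 0 < tupleMult U (U i) := tupleMult_pos_iff.2 ⟨i, rfl⟩
    show tupleMult V (U i) ≠ tupleMult U (U i)
    omega
  obtain ⟨M₁, hle, hM₁⟩ := unbalanced.toFinite.exists_le_maximal hUi
  obtain ⟨j, rfl⟩ := tupleMult_pos_iff.1
    (lt_of_le_of_lt (Nat.zero_le _) ((hVheavy M₁ hM₁).lt_of_ne hM₁.1.symm))
  exact hUV i j (Submodule.eq_of_le_of_finrank_le hle (hi j))

end IsometrySolution

theorem nontrivial_solution_ne_and_inclusion_general
    (K W : Type*) [Field K] [Fintype K] [AddCommGroup W] [Module K W]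
    [FiniteDimensional K W]
    (U V : Fin (Fintype.card K + 1) → Submodule K W)
    (hsol : IsometrySolution U V) (hnontriv : ¬ TuplesEquiv U V)
    (n : ℕ)
    (hmaxV : (Finset.univ.sup fun i => Module.finrank K ↥(V i)) = n)
    (hmaxU : (Finset.univ.sup fun i => Module.finrank K ↥(U i)) = n) :
    (∀ i j, U i ≠ V j) ∧ (∀ i j, V i ≤ V j → i = j) := by
  have : Finite W := Module.finite_of_finite K
  obtain ⟨i, -, hi⟩ := exists_mem_eq_sup univ univ_nonempty fun i => Module.finrank K (U i)
  have hdim (j) : Module.finrank K (V j) ≤ Module.finrank K (U i) := by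
    rw [← hi, hmaxU, ← hmaxV]
    exact le_sup (f := fun j => Module.finrank K (V j)) (mem_univ j)
  obtain ⟨M, hmax, hM⟩ := hsol.exists_maximal_lt_tupleMult le_rfl hnontriv hdim
  replace hmax : Maximal (fun X => tupleMult U X ≠ tupleMult V X) M := by
    simpa only [ne_comm] using hmax
  exact ⟨fun i j hij => hsol.symm.ne_of_maximal le_rfl hmax hM j i hij.symm,
    fun i j => hsol.symm.eq_of_le_of_maximal le_rfl hmax hM⟩

/-- In a nontrivial minimal solution with equal maximal dimensions `n > 1`:
(a) `U i ≠ V j` for all `i`, `j`, and (b) `V i ⊆ V j` implies `i = j`. -/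
theorem nontrivial_solution_ne_and_inclusion
    (K W : Type*) [Field K] [Fintype K] [AddCommGroup W] [Module K W]
    [FiniteDimensional K W]
    (U V : Fin (Fintype.card K + 1) → Submodule K W)
    (hsol : IsometrySolution U V) (hnontriv : ¬ TuplesEquiv U V)
    (n : ℕ) (hn : 1 < n)
    (hmaxV : (Finset.univ.sup fun i => Module.finrank K ↥(V i)) = n)
    (hmaxU : (Finset.univ.sup fun i => Module.finrank K ↥(U i)) = n) :
    (∀ i j, U i ≠ V j) ∧ (∀ i j, V i ≤ V j → i = j) :=
  nontrivial_solution_ne_and_inclusion_general K W U V hsol hnontriv n hmaxV hmaxU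
end
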